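/- arXiv:1905.09563 — 7 statements merged into one kernel-verified Lean document; each statement's English description precedes it below -/
import Mathlib

section
/- Let τ(s) = Σ_{k=N}^∞ |s|^{k/(N-1)}/k! for an integer N ≥ 2, and let τ*(t) = sup_{s∈ℝ}(ts − τ(s)) be its convex conjugate. Then τ(2^{N-1} s) ≥ 2^N τ(s) for all s ∈ ℝ, and consequently τ*(2t) ≤ 2^N τ*(t) for all t ∈ ℝ. -/
/-!
Every term of `τ` is homogeneous: replacing `s` by `b^(N-1) s` multiplies the `k`-th term
`|s|^{k/(N-1)}/k!` by `b^k`, which is at least `b^N` since only `k ≥ N` occurs. The inequality for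
`τ*` follows from this one for any conjugate, by substituting `s = b^(N-1) u` in the supremum.
-/

/-- The function `τ(s) = Σ_{k=N}^∞ |s|^{k/(N-1)}/k!`. -/
noncomputable def tauFun (N : ℕ) (s : ℝ) : ℝ :=
  ∑' k : ℕ, if N ≤ k then |s| ^ ((k : ℝ) / ((N : ℝ) - 1)) / (k.factorial : ℝ) else 0

/-- The Legendre–Fenchel conjugate `τ*(t) = sup_s (t·s − τ(s))`, valued in `EReal`. -/
noncomputable def tauStar (N : ℕ) (t : ℝ) : EReal :=
  ⨆ s : ℝ, ((t * s - tauFun N s : ℝ) : EReal)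

noncomputable def fenchelConj (φ : ℝ → ℝ) (t : ℝ) : EReal :=
  ⨆ s : ℝ, ((t * s - φ s : ℝ) : EReal)

theorem fenchelConj_mul_le {φ : ℝ → ℝ} {a b c : ℝ} (ha : 0 ≤ a) (hb : b ≠ 0) (hcb : c * b = a)
    (h : ∀ s, a * φ s ≤ φ (b * s)) (t : ℝ) :
    fenchelConj φ (c * t) ≤ (a : EReal) * fenchelConj φ t := by
  refine iSup_le fun s => ?_
  obtain ⟨u, rfl⟩ : ∃ u, s = b * u := ⟨s / b, by field_simp⟩
  have hlin : c * t * (b * u) = a * (t * u) := by rw [← hcb]; ring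
  calc ((c * t * (b * u) - φ (b * u) : ℝ) : EReal)
      ≤ ((a * (t * u - φ u) : ℝ) : EReal) := by
        rw [EReal.coe_le_coe_iff]; linarith [h u]
    _ = (a : EReal) * ((t * u - φ u : ℝ) : EReal) := EReal.coe_mul _ _
    _ ≤ (a : EReal) * fenchelConj φ t :=
        mul_le_mul_of_nonneg_left (le_iSup (fun s => ((t * s - φ s : ℝ) : EReal)) u)
          (EReal.coe_nonneg.mpr ha)

noncomputable def tauTerm (N k : ℕ) (s : ℝ) : ℝ :=
  if N ≤ k then |s| ^ ((k : ℝ) / ((N : ℝ) - 1)) / (k.factorial : ℝ) else 0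

theorem tauFun_eq_tsum (N : ℕ) (s : ℝ) : tauFun N s = ∑' k, tauTerm N k s := rfl

theorem tauTerm_nonneg (N k : ℕ) (s : ℝ) : 0 ≤ tauTerm N k s := by
  unfold tauTerm; split <;> positivity

theorem tauTerm_le_pow_div_factorial (N k : ℕ) (s : ℝ) :
    tauTerm N k s ≤ (|s| ^ (1 / ((N : ℝ) - 1))) ^ k / k.factorial := by
  unfold tauTerm
  split
  · rw [← Real.rpow_natCast, ← Real.rpow_mul (abs_nonneg s), one_div_mul_eq_div]
  · positivity

theorem summable_tauTerm (N : ℕ) (s : ℝ) : Summable (tauTerm N · s) :=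
  .of_nonneg_of_le (tauTerm_nonneg N · s) (tauTerm_le_pow_div_factorial N · s)
    (Real.summable_pow_div_factorial _)

theorem tauTerm_pow_mul {N : ℕ} (hN : 2 ≤ N) (k : ℕ) {b : ℝ} (hb : 0 ≤ b) (s : ℝ) :
    tauTerm N k (b ^ (N - 1) * s) = b ^ k * tauTerm N k s := by
  unfold tauTerm
  split
  · have hcast : ((N - 1 : ℕ) : ℝ) = (N : ℝ) - 1 := by rw [Nat.cast_sub (by omega)]; simp
    have hscale : (b ^ (N - 1)) ^ ((k : ℝ) / ((N : ℝ) - 1)) = b ^ k := by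
      rw [← Real.rpow_natCast b (N - 1), ← Real.rpow_mul hb, hcast,
        mul_div_cancel₀ _ (by rw [← hcast]; exact_mod_cast (by omega : N - 1 ≠ 0)),
        Real.rpow_natCast]
    rw [abs_mul, abs_of_nonneg (by positivity), Real.mul_rpow (by positivity) (abs_nonneg s),
      hscale, mul_div_assoc]
  · simp

theorem pow_mul_tauTerm_le {N : ℕ} (hN : 2 ≤ N) (k : ℕ) {b : ℝ} (hb : 1 ≤ b) (s : ℝ) :
    b ^ N * tauTerm N k s ≤ tauTerm N k (b ^ (N - 1) * s) := by
  rw [tauTerm_pow_mul hN k (by linarith) s]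
  by_cases hk : N ≤ k
  · exact mul_le_mul_of_nonneg_right (pow_le_pow_right₀ hb hk) (tauTerm_nonneg N k s)
  · simp [tauTerm, hk]

theorem pow_mul_tauFun_le {N : ℕ} (hN : 2 ≤ N) {b : ℝ} (hb : 1 ≤ b) (s : ℝ) :
    b ^ N * tauFun N s ≤ tauFun N (b ^ (N - 1) * s) := by
  rw [tauFun_eq_tsum, tauFun_eq_tsum, ← tsum_mul_left]
  exact ((summable_tauTerm N s).mul_left _).tsum_le_tsum (pow_mul_tauTerm_le hN · hb s)
    (summable_tauTerm N _)

theorem tauStar_mul_le {N : ℕ} (hN : 2 ≤ N) {b : ℝ} (hb : 1 ≤ b) (t : ℝ) :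
    tauStar N (b * t) ≤ ((b ^ N : ℝ) : EReal) * tauStar N t :=
  fenchelConj_mul_le (by positivity) (by positivity)
    (by rw [← pow_succ']; congr 1; omega) (pow_mul_tauFun_le hN hb) t

theorem stmt0 (N : ℕ) (hN : 2 ≤ N) :
    (∀ s : ℝ, (2 : ℝ) ^ N * tauFun N s ≤ tauFun N ((2 : ℝ) ^ (N - 1) * s)) ∧
    (∀ t : ℝ, tauStar N (2 * t) ≤ ((2 : ℝ) ^ N : EReal) * tauStar N t) :=
  ⟨pow_mul_tauFun_le hN one_le_two, fun t => by
    simpa only [EReal.coe_pow] using tauStar_mul_le hN one_le_two t⟩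
end

section
/- Under the same hypotheses, the restriction of φ to M̂ = {ψ₁ − ψ₂ = 1} is bounded from below and satisfies the Palais–Smale condition at every level c ∈ ℝ: every sequence (uₙ) in M̂ with φ(uₙ) → c and ‖(φ|_{M̂})'(uₙ)‖ → 0 admits a convergent subsequence. -/
/-!
Since `ψ₁` and `ψ₂` vanish at `0`, the constraint set `M̂ = {ψ₁ - ψ₂ = 1}` avoids `0`, so `φ > 0`
on it. Along a Palais–Smale sequence pick almost optimal multipliers `λₙ`, so that
`Eₙ = φ'(uₙ) - λₙ (ψ₁'(uₙ) - ψ₂'(uₙ)) → 0`.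

The key tool is that, for a bounded sequence `wₙ ⇀ v`, complete continuity of `ψ₁'` makes `ψ₁`
weakly continuous, while `(S)₊` makes every `φ + λ ψ₂` (`λ > 0`) weakly lower semicontinuous;
hence `φ wₙ → 0` and `(ψ₁ - ψ₂) wₙ → a` give `φ v ≤ 0` and `a ≤ (ψ₁ - ψ₂) v`.

If `(uₙ)` were unbounded, a subsequence of `uₙ / ‖uₙ‖` would, by reflexivity, have such a weak
limit `v` with `a = 0` by homogeneity, so `v = 0`; then Euler's identity `⟨φ'(w), w⟩ = α φ(w)` and `(S)₊` force `uₙ / ‖uₙ‖ → 0` strongly,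
which is absurd. Once `(uₙ)` is bounded, Euler's identity gives `λₙ → c`, and the same argument
with `a = 1` rules out `c = 0`. Finally, along a weakly convergent subsequence `uₙ ⇀ v`,
`⟨φ'(uₙ) + λₙ ψ₂'(uₙ), uₙ - v⟩ = Eₙ(uₙ - v) + λₙ ⟨ψ₁'(uₙ), uₙ - v⟩ → 0`, and `(S)₊` gives `uₙ → v`.
-/

open Filter Topology

/-- Weak convergence of a sequence in a normed space, tested against all
continuous linear functionals. -/
def WeakConvSeq {X : Type*} [NormedAddCommGroup X] [NormedSpace ℝ X]
    (u : ℕ → X) (v : X) : Prop :=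
  ∀ l : X →L[ℝ] ℝ, Tendsto (fun n => l (u n)) atTop (𝓝 (l v))

/-- A map `F : X → X'` is of class `(S)₊` if whenever `uₙ ⇀ u` weakly and
`limsup ⟨F(uₙ), uₙ − u⟩ ≤ 0`, then `uₙ → u` strongly. -/
def ClassSPlus {X : Type*} [NormedAddCommGroup X] [NormedSpace ℝ X]
    (F : X → X →L[ℝ] ℝ) : Prop :=
  ∀ (u : ℕ → X) (v : X), WeakConvSeq u v →
    limsup (fun n => F (u n) (u n - v)) atTop ≤ 0 →
    Tendsto u atTop (𝓝 v)

/-- A map is completely continuous if it is continuous and maps bounded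
sequences to sequences admitting a (strongly) convergent subsequence. -/
def CompletelyContinuous {X Y : Type*} [NormedAddCommGroup X] [NormedSpace ℝ X]
    [NormedAddCommGroup Y] (F : X → Y) : Prop :=
  Continuous F ∧ ∀ u : ℕ → X, Bornology.IsBounded (Set.range u) →
    ∃ σ : ℕ → ℕ, StrictMono σ ∧ ∃ y : Y, Tendsto (fun k => F (u (σ k))) atTop (𝓝 y)

lemma limsup_nonpos_of_tendsto_add {a b : ℕ → ℝ} (ha : Tendsto a atTop (𝓝 0))
    (hb : ∀ᶠ n in atTop, b n ≤ 0) : limsup (fun n => a n + b n) atTop ≤ 0 := by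
  rw [limsup_eq]
  by_cases hbdd : BddBelow {x | ∀ᶠ n in atTop, a n + b n ≤ x}
  · refine le_of_forall_pos_le_add fun ε hε => ?_
    rw [zero_add]
    refine csInf_le hbdd ?_
    filter_upwards [ha.eventually (gt_mem_nhds hε), hb] with n han hbn
    linarith
  · rw [Real.sInf_of_not_bddBelow hbdd]

lemma nonpos_and_nonneg_of_forall_le_mul {x G : ℝ} (h : ∀ μ : ℝ, 0 < μ → x ≤ μ * G) :
    x ≤ 0 ∧ 0 ≤ G := by
  have hx : x ≤ 0 := by
    have hlim : Tendsto (fun μ => μ * G) (𝓝[>] 0) (𝓝 (0 * G)) :=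
      tendsto_nhdsWithin_of_tendsto_nhds ((continuous_mul_const G).tendsto 0)
    rw [zero_mul] at hlim
    exact ge_of_tendsto hlim (eventually_nhdsWithin_of_forall h)
  refine ⟨hx, not_lt.1 fun hG => ?_⟩
  have := h ((1 - x) / -G) (div_pos (by linarith) (neg_pos.2 hG))
  rw [div_mul_eq_mul_div, div_neg, mul_div_cancel_right₀ _ hG.ne] at this
  linarith

lemma exists_seq_tendsto_of_tendsto_iInf {ι : Type*} [Nonempty ι] {f : ℕ → ι → ℝ}
    (hf : ∀ n i, 0 ≤ f n i) (h : Tendsto (fun n => ⨅ i, f n i) atTop (𝓝 0)) :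
    ∃ g : ℕ → ι, Tendsto (fun n => f n (g n)) atTop (𝓝 0) := by
  have hex : ∀ n : ℕ, ∃ i, f n i < (⨅ i, f n i) + 1 / ((n : ℝ) + 1) := fun n =>
    exists_lt_of_ciInf_lt (lt_add_of_pos_right _ Nat.one_div_pos_of_nat)
  choose g hg using hex
  refine ⟨g, squeeze_zero (fun n => hf n (g n)) (fun n => (hg n).le) ?_⟩
  simpa using h.add tendsto_one_div_add_atTop_nhds_zero_nat

lemma exists_strictMono_tendsto_norm_atTop {X : Type*} [SeminormedAddCommGroup X] {u : ℕ → X}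
    (hu : ¬ Bornology.IsBounded (Set.range u)) :
    ∃ σ : ℕ → ℕ, StrictMono σ ∧ Tendsto (fun n => ‖u (σ n)‖) atTop atTop := by
  have hfreq : ∀ n : ℕ, ∃ᶠ k in atTop, (n : ℝ) ≤ ‖u k‖ := by
    intro n
    by_contra h
    have hbdd : IsBoundedUnder (· ≤ ·) cofinite (fun k => ‖u k‖) := by
      rw [Nat.cofinite_eq_atTop]
      exact ⟨n, (not_frequently.1 h).mono fun k hk => (not_le.1 hk).le⟩
    obtain ⟨C, hC⟩ := hbdd.bddAbove_range_of_cofinite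
    exact hu (isBounded_iff_forall_norm_le.2 ⟨C, by rintro _ ⟨k, rfl⟩; exact hC ⟨k, rfl⟩⟩)
  obtain ⟨σ, hσ, h⟩ := extraction_forall_of_frequently hfreq
  exact ⟨σ, hσ, tendsto_atTop_mono h tendsto_natCast_atTop_atTop⟩

lemma MapClusterPt.apply_eq_of_tendsto {α β γ : Type*} [TopologicalSpace β] [TopologicalSpace γ]
    [T2Space γ] {F : Filter α} {u : α → β} {x : β} (hx : MapClusterPt x F u) {f : β → γ}
    (hf : Continuous f) {L : γ} (hL : Tendsto (f ∘ u) F (𝓝 L)) : f x = L :=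
  eq_of_nhds_neBot (ClusterPt.mono (hx.tendsto_comp (hf.tendsto x)) hL)

lemma exists_strictMono_forall_tendsto {ι : Type*} [Countable ι] (f : ι → ℕ → ℝ)
    (hf : ∀ i, ∃ C, ∀ n, |f i n| ≤ C) :
    ∃ σ : ℕ → ℕ, StrictMono σ ∧ ∀ i, ∃ L, Tendsto (fun n => f i (σ n)) atTop (𝓝 L) := by
  choose C hC using hf
  have hcpt : IsCompact (Set.univ.pi fun i => Set.Icc (-C i) (C i)) :=
    isCompact_univ_pi fun i => isCompact_Icc
  obtain ⟨L, -, σ, hσ, hlim⟩ := hcpt.isSeqCompact (x := fun n i => f i n)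
    fun n => Set.mem_univ_pi.2 fun i => abs_le.1 (hC i n)
  exact ⟨σ, hσ, fun i => ⟨L i, tendsto_pi_nhds.1 hlim i⟩⟩

section Calculus

variable {X : Type*} [NormedAddCommGroup X] [NormedSpace ℝ X]

lemma exists_mem_Ioo_sub_eq_fderiv {F : X → ℝ} (hF : Differentiable ℝ F) (a b : X) :
    ∃ θ ∈ Set.Ioo (0 : ℝ) 1, F b - F a = fderiv ℝ F (a + θ • (b - a)) (b - a) := by
  have hder : ∀ t : ℝ, HasDerivAt (fun t => F (a + t • (b - a)))
      (fderiv ℝ F (a + t • (b - a)) (b - a)) t := fun t =>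
    (hF _).hasFDerivAt.comp_hasDerivAt t
      (by simpa using ((hasDerivAt_id t).smul_const (b - a)).const_add a)
  obtain ⟨θ, hθ, hval⟩ := exists_hasDerivAt_eq_slope _ _ zero_lt_one
    (fun t _ => (hder t).continuousAt.continuousWithinAt) (fun t _ => hder t)
  exact ⟨θ, hθ, by simpa using hval.symm⟩

lemma apply_zero_of_posHomogeneous {F : X → ℝ} {α : ℝ} (hα : α ≠ 0)
    (hh : ∀ t : ℝ, 0 < t → ∀ u, F (t • u) = t ^ α * F u) : F 0 = 0 := by
  have h := hh 2 two_pos 0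
  rw [smul_zero] at h
  have h2 : (2 : ℝ) ^ α - 1 ≠ 0 := fun h1 => hα <|
    (Real.rpow_right_inj two_pos (by norm_num)).1 ((sub_eq_zero.1 h1).trans (Real.rpow_zero 2).symm)
  have h3 : ((2 : ℝ) ^ α - 1) * F 0 = 0 := by linarith
  exact (mul_eq_zero.1 h3).resolve_left h2

lemma fderiv_apply_self_of_posHomogeneous {F : X → ℝ} {α : ℝ} {u : X}
    (hF : DifferentiableAt ℝ F u) (hh : ∀ t : ℝ, 0 < t → ∀ u, F (t • u) = t ^ α * F u) :
    fderiv ℝ F u u = α * F u := by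
  have h1 : HasDerivAt (fun t : ℝ => F (t • u)) (fderiv ℝ F u u) 1 := by
    have hc : HasDerivAt (fun t : ℝ => t • u) u 1 := by
      simpa using (hasDerivAt_id (1 : ℝ)).smul_const u
    exact hF.hasFDerivAt.comp_hasDerivAt_of_eq 1 hc (one_smul ℝ u).symm
  have h2 : HasDerivAt (fun t : ℝ => F (t • u)) (α * F u) 1 := by
    have hr : HasDerivAt (fun t : ℝ => t ^ α * F u) (α * F u) 1 := by
      simpa using
        (Real.hasDerivAt_rpow_const (x := 1) (p := α) (Or.inl one_ne_zero)).mul_const (F u)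
    refine hr.congr_of_eventuallyEq ?_
    filter_upwards [eventually_gt_nhds one_pos] with t ht
    exact hh t ht u
  exact h1.unique h2

end Calculus

section WeakConvergence

variable {X : Type*} [NormedAddCommGroup X] [NormedSpace ℝ X] {w : ℕ → X} {v : X}

lemma WeakConvSeq.comp_tendsto (hw : WeakConvSeq w v) {σ : ℕ → ℕ}
    (hσ : Tendsto σ atTop atTop) : WeakConvSeq (fun n => w (σ n)) v :=
  fun l => (hw l).comp hσ

lemma WeakConvSeq.tendsto_apply_sub (hw : WeakConvSeq w v)
    (hwb : Bornology.IsBounded (Set.range w)) {K : ℕ → StrongDual ℝ X} {z : StrongDual ℝ X}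
    (hK : Tendsto K atTop (𝓝 z)) : Tendsto (fun n => K n (w n - v)) atTop (𝓝 0) := by
  obtain ⟨C, hC⟩ := isBounded_iff_forall_norm_le.1 hwb
  have hnear : Tendsto (fun n => (K n - z) (w n - v)) atTop (𝓝 0) := by
    refine squeeze_zero_norm (fun n => ((K n - z).le_opNorm _).trans
      (mul_le_mul_of_nonneg_left ((norm_sub_le _ _).trans
        (add_le_add_left (hC _ ⟨n, rfl⟩) _)) (norm_nonneg _))) ?_
    simpa using (tendsto_iff_norm_sub_tendsto_zero.1 hK).mul_const (C + ‖v‖)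
  have hfar : Tendsto (fun n => z (w n - v)) atTop (𝓝 0) := by
    simpa using (hw z).sub_const (z v)
  simpa using hnear.add hfar

lemma WeakConvSeq.add_smul_sub (hw : WeakConvSeq w v) {θ : ℕ → ℝ}
    (hθ : ∀ n, θ n ∈ Set.Icc (0 : ℝ) 1) : WeakConvSeq (fun n => v + θ n • (w n - v)) v := by
  intro l
  have hθb : IsBoundedUnder (· ≤ ·) atTop fun n => ‖θ n‖ :=
    isBoundedUnder_of ⟨1, fun n => by rw [Real.norm_of_nonneg (hθ n).1]; exact (hθ n).2⟩
  have h0 : Tendsto (fun n => l (w n) - l v) atTop (𝓝 0) := by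
    simpa using (hw l).sub_const (l v)
  have hθ0 := (h0.zero_mul_isBoundedUnder_le hθb).congr fun n => mul_comm _ _
  simpa using tendsto_const_nhds.add hθ0

lemma CompletelyContinuous.tendsto_apply_sub {F : X → StrongDual ℝ X}
    (hF : CompletelyContinuous F) {ξ : ℕ → X} (hξ : Bornology.IsBounded (Set.range ξ))
    (hw : WeakConvSeq w v) (hwb : Bornology.IsBounded (Set.range w)) :
    Tendsto (fun n => F (ξ n) (w n - v)) atTop (𝓝 0) := by
  refine tendsto_of_subseq_tendsto fun ns hns => ?_
  obtain ⟨ms, hms, z, hz⟩ := hF.2 (ξ ∘ ns) (hξ.subset (Set.range_comp_subset_range ns ξ))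
  have hsub := hns.comp hms.tendsto_atTop
  exact ⟨ms, (hw.comp_tendsto hsub).tendsto_apply_sub
    (hwb.subset (Set.range_comp_subset_range _ w)) hz⟩

lemma WeakConvSeq.tendsto_of_completelyContinuous_fderiv {F : X → ℝ} (hF : Differentiable ℝ F)
    (hF' : CompletelyContinuous (fderiv ℝ F)) (hw : WeakConvSeq w v)
    (hwb : Bornology.IsBounded (Set.range w)) :
    Tendsto (fun n => F (w n)) atTop (𝓝 (F v)) := by
  choose θ hθ hmvt using fun n => exists_mem_Ioo_sub_eq_fderiv hF v (w n)
  obtain ⟨C, hC⟩ := isBounded_iff_forall_norm_le.1 hwb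
  have hξ : Bornology.IsBounded (Set.range fun n => v + θ n • (w n - v)) := by
    refine isBounded_iff_forall_norm_le.2 ⟨‖v‖ + (C + ‖v‖), ?_⟩
    rintro _ ⟨n, rfl⟩
    have hseg : ‖θ n • (w n - v)‖ ≤ ‖w n - v‖ := by
      rw [norm_smul, Real.norm_of_nonneg (hθ n).1.le]
      exact mul_le_of_le_one_left (norm_nonneg _) (hθ n).2.le
    linarith [norm_add_le v (θ n • (w n - v)), norm_sub_le (w n) v, hC _ ⟨n, rfl⟩]
  have h0 := hF'.tendsto_apply_sub hξ hw hwb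
  simp_rw [← hmvt] at h0
  simpa using h0.add_const (F v)

end WeakConvergence

section WeakCompactness

variable {X : Type*} [NormedAddCommGroup X] [NormedSpace ℝ X]

lemma Submodule.exists_dual_map_eq_zero_apply_ne_zero {Y : Submodule ℝ X}
    (hY : IsClosed (Y : Set X)) {x : X} (hx : x ∉ Y) :
    ∃ f : StrongDual ℝ X, (∀ y ∈ Y, f y = 0) ∧ f x ≠ 0 := by
  -- `X ⧸ Y` is a normed space as soon as `IsClosed Y` is available as an instance
  have : IsClosed (Y : Set X) := hY
  obtain ⟨g, hg⟩ := SeparatingDual.exists_ne_zero (R := ℝ) (x := Y.mkQ x) (by simpa using hx)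
  exact ⟨g.comp Y.mkQL, fun y hy => by simp [(Submodule.Quotient.mk_eq_zero Y).2 hy], hg⟩

lemma TopologicalSpace.IsSeparable.exists_countable_dual_separating {s : Set X}
    (hs : TopologicalSpace.IsSeparable s) :
    ∃ G : Set (StrongDual ℝ X), G.Countable ∧ ∀ z ∈ s, (∀ g ∈ G, g z = 0) → z = 0 := by
  obtain ⟨c, hc, hsc⟩ := hs
  have hnorming : ∀ y : X, ∃ g : StrongDual ℝ X, ‖g‖ ≤ 1 ∧ g y = ‖y‖ := by
    intro y
    rcases eq_or_ne y 0 with rfl | hy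
    · exact ⟨0, by simp, by simp⟩
    · obtain ⟨g, hg1, hgy⟩ := exists_dual_vector ℝ y (norm_ne_zero_iff.2 hy)
      exact ⟨g, hg1.le, hgy⟩
  choose g hg1 hgy using hnorming
  refine ⟨g '' c, hc.image g, fun z hz hzero => ?_⟩
  by_contra hz0
  obtain ⟨y, hyc, hzy⟩ := Metric.mem_closure_iff.1 (hsc hz) (‖z‖ / 2) (by positivity)
  rw [dist_eq_norm] at hzy
  have hgz : g y z = 0 := hzero _ ⟨y, hyc, rfl⟩
  have : ‖y‖ ≤ ‖z - y‖ := by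
    calc ‖y‖ = g y (y - z) := by rw [map_sub, hgz, sub_zero, hgy]
      _ ≤ ‖g y‖ * ‖y - z‖ := (le_abs_self _).trans ((g y).le_opNorm _)
      _ ≤ ‖z - y‖ := by
        rw [norm_sub_rev]
        exact mul_le_of_le_one_left (norm_nonneg _) (hg1 y)
  linarith [norm_sub_norm_le z y]

noncomputable def weakBidualEmbedding (x : X) : WeakDual ℝ (StrongDual ℝ X) :=
  StrongDual.toWeakDual (NormedSpace.inclusionInDoubleDual ℝ X x)

lemma exists_mem_weakBidualEmbedding_eq_of_mapClusterPt
    (hrefl : Function.Surjective (NormedSpace.inclusionInDoubleDual ℝ X)) {Y : Submodule ℝ X}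
    (hY : IsClosed (Y : Set X)) {x : ℕ → X} (hxY : ∀ n, x n ∈ Y) {Λ : WeakDual ℝ (StrongDual ℝ X)}
    (hΛ : MapClusterPt Λ atTop fun n => weakBidualEmbedding (x n)) :
    ∃ v ∈ Y, weakBidualEmbedding v = Λ ∧
      ∀ (l : StrongDual ℝ X) (a : ℝ), Tendsto (fun n => l (x n)) atTop (𝓝 a) → l v = a := by
  obtain ⟨v, hv⟩ := hrefl (WeakDual.toStrongDual Λ)
  have hJv : weakBidualEmbedding v = Λ := by simp [weakBidualEmbedding, hv]
  have heval : ∀ (l : StrongDual ℝ X) (a : ℝ),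
      Tendsto (fun n => l (x n)) atTop (𝓝 a) → l v = a := fun l a h => by
    rw [← hΛ.apply_eq_of_tendsto (WeakDual.eval_continuous l) h, ← hJv]
    rfl
  refine ⟨v, ?_, hJv, heval⟩
  by_contra hvY
  obtain ⟨f, hf0, hfv⟩ := Y.exists_dual_map_eq_zero_apply_ne_zero hY hvY
  exact hfv (heval f 0 (by simp [hf0 _ (hxY _)]))

/-- Eberlein–Šmulian for reflexive spaces: the weak-* cluster points in `X**` of the bounded
sequence all come from its closed span, and are pinned down there by countably many separating
functionals along a diagonal subsequence; compactness of balls in `X**` does the rest. -/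
theorem exists_strictMono_weakConvSeq_of_isBounded
    (hrefl : Function.Surjective (NormedSpace.inclusionInDoubleDual ℝ X))
    {u : ℕ → X} (hu : Bornology.IsBounded (Set.range u)) :
    ∃ σ : ℕ → ℕ, StrictMono σ ∧ ∃ v : X, WeakConvSeq (fun n => u (σ n)) v := by
  obtain ⟨C, hC⟩ := isBounded_iff_forall_norm_le.1 hu
  set Y := (Submodule.span ℝ (Set.range u)).topologicalClosure
  have hYsep : TopologicalSpace.IsSeparable (Y : Set X) := by
    rw [Submodule.topologicalClosure_coe]
    exact (Set.countable_range u).isSeparable.span.closure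
  obtain ⟨G, hGc, hG⟩ := hYsep.exists_countable_dual_separating
  have : Countable G := hGc.to_subtype
  obtain ⟨σ, hσ, hL⟩ := exists_strictMono_forall_tendsto
    (fun (g : G) n => (g : StrongDual ℝ X) (u n)) fun g => ⟨‖(g : StrongDual ℝ X)‖ * C, fun n =>
      ((g : StrongDual ℝ X).le_opNorm _).trans (by gcongr; exact hC _ ⟨n, rfl⟩)⟩
  choose L hL using hL
  have huY : ∀ n, u (σ n) ∈ Y := fun n =>
    Submodule.le_topologicalClosure _ (Submodule.subset_span ⟨σ n, rfl⟩)
  have hcluster := fun Λ => exists_mem_weakBidualEmbedding_eq_of_mapClusterPt (Λ := Λ) hrefl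
    (Submodule.isClosed_topologicalClosure _) huY
  have hK := WeakDual.isCompact_closedBall (𝕜 := ℝ) (0 : StrongDual ℝ (StrongDual ℝ X)) C
  have hmem : ∀ n, weakBidualEmbedding (u (σ n)) ∈
      WeakDual.toStrongDual ⁻¹' Metric.closedBall 0 C := fun n => by
    have h := (NormedSpace.double_dual_bound ℝ X (u (σ n))).trans (hC _ ⟨σ n, rfl⟩)
    exact (mem_closedBall_zero_iff (E := StrongDual ℝ (StrongDual ℝ X))).2 h
  obtain ⟨Λ₀, -, hΛ₀⟩ := hK.exists_mapClusterPt (f := atTop) (tendsto_principal.2 (.of_forall hmem))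
  obtain ⟨v₀, hv₀Y, rfl, hv₀L⟩ := hcluster Λ₀ hΛ₀
  have hlim : Tendsto (fun n => weakBidualEmbedding (u (σ n))) atTop
      (𝓝 (weakBidualEmbedding v₀)) := by
    refine hK.tendsto_nhds_of_unique_mapClusterPt (.of_forall hmem) fun Λ _ hΛ => ?_
    obtain ⟨v, hvY, rfl, hvL⟩ := hcluster Λ hΛ
    rw [← sub_eq_zero.1 (hG (v - v₀) (Y.sub_mem hvY hv₀Y) fun g hg => by
      rw [map_sub, hvL g (L ⟨g, hg⟩) (hL ⟨g, hg⟩), hv₀L g (L ⟨g, hg⟩) (hL ⟨g, hg⟩), sub_self])]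
  exact ⟨σ, hσ, v₀, fun l => ((WeakDual.eval_continuous l).tendsto _).comp hlim⟩

end WeakCompactness

section ClassSPlus

variable {X : Type*} [NormedAddCommGroup X] [NormedSpace ℝ X] {w : ℕ → X} {v : X}

/-- If `h v > L`, the mean value points `ξₙ ∈ [v, wₙ]` satisfy `⟨h'(ξₙ), ξₙ - v⟩ ≤ 0` eventually,
so `ξₙ → v` by `(S)₊`; then `h'(ξₙ) → h'(v)` in norm and `h(wₙ) → h(v)`. -/
lemma ClassSPlus.le_of_tendsto {h : X → ℝ} (hh : ContDiff ℝ 1 h) (hS : ClassSPlus (fderiv ℝ h))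
    (hw : WeakConvSeq w v) (hwb : Bornology.IsBounded (Set.range w)) {L : ℝ}
    (hL : Tendsto (fun n => h (w n)) atTop (𝓝 L)) : h v ≤ L := by
  by_contra! hlt
  have hdiff : Differentiable ℝ h := hh.differentiable one_ne_zero
  choose θ hθ hmvt using fun n => exists_mem_Ioo_sub_eq_fderiv hdiff v (w n)
  set ξ : ℕ → X := fun n => v + θ n • (w n - v) with hξ
  have hξv : Tendsto ξ atTop (𝓝 v) := by
    refine hS ξ v (hw.add_smul_sub fun n => Set.Ioo_subset_Icc_self (hθ n)) ?_
    have hle : ∀ᶠ n in atTop, fderiv ℝ h (ξ n) (ξ n - v) ≤ 0 := by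
      filter_upwards [hL.eventually (gt_mem_nhds hlt)] with n hn
      rw [show ξ n - v = θ n • (w n - v) by simp [ξ], map_smul, smul_eq_mul, ← hmvt]
      exact mul_nonpos_of_nonneg_of_nonpos (hθ n).1.le (by linarith)
    simpa only [zero_add] using limsup_nonpos_of_tendsto_add tendsto_const_nhds hle
  have hderiv : Tendsto (fun n => fderiv ℝ h (ξ n)) atTop (𝓝 (fderiv ℝ h v)) :=
    ((hh.continuous_fderiv one_ne_zero).tendsto v).comp hξv
  have h0 := hw.tendsto_apply_sub hwb hderiv
  simp_rw [hξ, ← hmvt] at h0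
  have hv : Tendsto (fun n => h (w n)) atTop (𝓝 (h v)) := by simpa using h0.add_const (h v)
  exact hlt.ne (tendsto_nhds_unique hL hv)

/-- Depending on the sign of `⟨B wₙ, wₙ - v⟩` along a subsequence, `λ = c/2` or `λ = 2c` makes
`(λ - λₙ) ⟨B wₙ, wₙ - v⟩ ≤ 0` eventually, and `(S)₊` of `A + λ B` applies. -/
lemma exists_strictMono_tendsto_of_classSPlus {A B : X → StrongDual ℝ X}
    (hS : ∀ lam : ℝ, 0 < lam → ClassSPlus (fun u => A u + lam • B u))
    (hw : WeakConvSeq w v) {lam : ℕ → ℝ} {c : ℝ} (hc : 0 < c) (hlam : Tendsto lam atTop (𝓝 c))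
    (h0 : Tendsto (fun n => (A (w n) + lam n • B (w n)) (w n - v)) atTop (𝓝 0)) :
    ∃ σ : ℕ → ℕ, StrictMono σ ∧ Tendsto (fun n => w (σ n)) atTop (𝓝 v) := by
  set T : ℕ → ℝ := fun n => B (w n) (w n - v)
  obtain ⟨μ, hμ, σ, hσ, hsign⟩ : ∃ μ > 0, ∃ σ : ℕ → ℕ, StrictMono σ ∧
      ∀ᶠ n in atTop, (μ - lam (σ n)) * T (σ n) ≤ 0 := by
    by_cases hT : ∃ᶠ n in atTop, 0 ≤ T n
    · obtain ⟨σ, hσ, hσT⟩ := extraction_of_frequently_atTop hT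
      refine ⟨c / 2, half_pos hc, σ, hσ, ?_⟩
      filter_upwards [(hlam.comp hσ.tendsto_atTop).eventually (lt_mem_nhds (half_lt_self hc))]
        with n hn
      exact mul_nonpos_of_nonpos_of_nonneg (by simp only [Function.comp] at hn; linarith) (hσT n)
    · refine ⟨2 * c, by positivity, id, strictMono_id, ?_⟩
      filter_upwards [not_frequently.1 hT, hlam.eventually (gt_mem_nhds (by linarith : c < 2 * c))]
        with n hTn hn
      exact mul_nonpos_of_nonneg_of_nonpos (by simp only [id]; linarith) (not_le.1 hTn).le
  refine ⟨σ, hσ, hS μ hμ _ v (hw.comp_tendsto hσ.tendsto_atTop) ?_⟩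
  convert limsup_nonpos_of_tendsto_add (h0.comp hσ.tendsto_atTop) hsign using 2
  funext n
  simp only [T, Function.comp, add_apply, smul_apply, smul_eq_mul]
  ring

end ClassSPlus

section PalaisSmale

variable {X : Type*} [NormedAddCommGroup X] [NormedSpace ℝ X] {φ ψ₁ ψ₂ : X → ℝ} {α : ℝ}

lemma ne_zero_of_sub_apply_ne_zero (hα : α ≠ 0)
    (hψ₁h : ∀ t : ℝ, 0 < t → ∀ u, ψ₁ (t • u) = t ^ α * ψ₁ u)
    (hψ₂h : ∀ t : ℝ, 0 < t → ∀ u, ψ₂ (t • u) = t ^ α * ψ₂ u) {u : X}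
    (hu : ψ₁ u - ψ₂ u ≠ 0) : u ≠ 0 := by
  rintro rfl
  rw [apply_zero_of_posHomogeneous hα hψ₁h, apply_zero_of_posHomogeneous hα hψ₂h, sub_zero] at hu
  exact hu rfl

lemma pos_of_sub_eq_one (hα : α ≠ 0)
    (hψ₁h : ∀ t : ℝ, 0 < t → ∀ u, ψ₁ (t • u) = t ^ α * ψ₁ u)
    (hψ₂h : ∀ t : ℝ, 0 < t → ∀ u, ψ₂ (t • u) = t ^ α * ψ₂ u)
    (hpos : ∀ u : X, u ≠ 0 → 0 ≤ ψ₁ u - ψ₂ u → 0 < φ u) {u : X} (hu : ψ₁ u - ψ₂ u = 1) :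
    0 < φ u :=
  hpos u (ne_zero_of_sub_apply_ne_zero hα hψ₁h hψ₂h (hu.trans_ne one_ne_zero))
    (hu.symm ▸ zero_le_one)

lemma nonpos_and_le_of_weakConvSeq (hφC : ContDiff ℝ 1 φ) (hψ₁C : ContDiff ℝ 1 ψ₁)
    (hψ₂C : ContDiff ℝ 1 ψ₂)
    (hS : ∀ lam : ℝ, 0 < lam → ClassSPlus (fun u => fderiv ℝ φ u + lam • fderiv ℝ ψ₂ u))
    (hcc : CompletelyContinuous (fun u => fderiv ℝ ψ₁ u)) {w : ℕ → X} {v : X}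
    (hw : WeakConvSeq w v) (hwb : Bornology.IsBounded (Set.range w))
    (hφw : Tendsto (fun n => φ (w n)) atTop (𝓝 0)) {a : ℝ}
    (hψw : Tendsto (fun n => ψ₁ (w n) - ψ₂ (w n)) atTop (𝓝 a)) :
    φ v ≤ 0 ∧ a ≤ ψ₁ v - ψ₂ v := by
  have hψ₁w := hw.tendsto_of_completelyContinuous_fderiv (hψ₁C.differentiable one_ne_zero) hcc hwb
  have hψ₂w : Tendsto (fun n => ψ₂ (w n)) atTop (𝓝 (ψ₁ v - a)) := by simpa using hψ₁w.sub hψw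
  have hle : ∀ μ : ℝ, 0 < μ → φ v ≤ μ * (ψ₁ v - ψ₂ v - a) := by
    intro μ hμ
    have hderiv : fderiv ℝ (fun u => φ u + μ * ψ₂ u) =
        fun u => fderiv ℝ φ u + μ • fderiv ℝ ψ₂ u := by
      funext u
      rw [fderiv_fun_add (hφC.differentiable one_ne_zero u)
        ((hψ₂C.differentiable one_ne_zero u).const_mul μ),
        fderiv_const_mul (hψ₂C.differentiable one_ne_zero u)]
    have hlsc := ClassSPlus.le_of_tendsto (hφC.add (contDiff_const.mul hψ₂C))
      (hderiv ▸ hS μ hμ) hw hwb (hφw.add (hψ₂w.const_mul μ))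
    linear_combination hlsc
  obtain ⟨hφv, hψv⟩ := nonpos_and_nonneg_of_forall_le_mul hle
  exact ⟨hφv, by linarith⟩

lemma tendsto_zero_of_weakConvSeq_zero (hφC : ContDiff ℝ 1 φ) (hψ₂C : ContDiff ℝ 1 ψ₂)
    (hφh : ∀ t : ℝ, 0 < t → ∀ u, φ (t • u) = t ^ α * φ u)
    (hψ₂h : ∀ t : ℝ, 0 < t → ∀ u, ψ₂ (t • u) = t ^ α * ψ₂ u)
    (hS : ClassSPlus (fun u => fderiv ℝ φ u + (1 : ℝ) • fderiv ℝ ψ₂ u)) {w : ℕ → X}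
    (hw : WeakConvSeq w 0) (hφw : Tendsto (fun n => φ (w n)) atTop (𝓝 0))
    (hψ₂w : Tendsto (fun n => ψ₂ (w n)) atTop (𝓝 0)) : Tendsto w atTop (𝓝 0) := by
  refine hS w 0 hw (le_of_eq (Tendsto.limsup_eq ?_))
  have heuler : ∀ n, (fderiv ℝ φ (w n) + (1 : ℝ) • fderiv ℝ ψ₂ (w n)) (w n - 0) =
      α * φ (w n) + α * ψ₂ (w n) := fun n => by
    simp only [sub_zero, add_apply, one_smul,
      fderiv_apply_self_of_posHomogeneous ((hφC.differentiable one_ne_zero) _) hφh,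
      fderiv_apply_self_of_posHomogeneous ((hψ₂C.differentiable one_ne_zero) _) hψ₂h]
  have hlim := (hφw.const_mul α).add (hψ₂w.const_mul α)
  rw [mul_zero, add_zero] at hlim
  exact hlim.congr fun n => (heuler n).symm

lemma exists_norm_eq_one_of_not_isBounded (hα : 0 < α)
    (hφh : ∀ t : ℝ, 0 < t → ∀ u, φ (t • u) = t ^ α * φ u)
    (hψ₁h : ∀ t : ℝ, 0 < t → ∀ u, ψ₁ (t • u) = t ^ α * ψ₁ u)
    (hψ₂h : ∀ t : ℝ, 0 < t → ∀ u, ψ₂ (t • u) = t ^ α * ψ₂ u) {u : ℕ → X} {c : ℝ}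
    (hu : ∀ n, ψ₁ (u n) - ψ₂ (u n) = 1) (hφu : Tendsto (fun n => φ (u n)) atTop (𝓝 c))
    (hub : ¬ Bornology.IsBounded (Set.range u)) :
    ∃ v : ℕ → X, (∀ n, ‖v n‖ = 1) ∧ Tendsto (fun n => φ (v n)) atTop (𝓝 0) ∧
      Tendsto (fun n => ψ₁ (v n) - ψ₂ (v n)) atTop (𝓝 0) := by
  obtain ⟨σ, hσ, ht⟩ := exists_strictMono_tendsto_norm_atTop hub
  have htpos : ∀ n, 0 < ‖u (σ n)‖ := fun n =>
    norm_pos_iff.2 (ne_zero_of_sub_apply_ne_zero hα.ne' hψ₁h hψ₂h ((hu _).trans_ne one_ne_zero))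
  have hscale : Tendsto (fun n => ‖u (σ n)‖⁻¹ ^ α) atTop (𝓝 0) :=
    ((tendsto_rpow_atTop hα).comp ht).inv_tendsto_atTop.congr fun n =>
      (Real.inv_rpow (htpos n).le α).symm
  refine ⟨fun n => ‖u (σ n)‖⁻¹ • u (σ n), fun n => ?_, ?_, ?_⟩
  · simp only [norm_smul, norm_inv, norm_norm, inv_mul_cancel₀ (htpos n).ne']
  · simpa [hφh _ (inv_pos.2 (htpos _))] using hscale.mul (hφu.comp hσ.tendsto_atTop)
  · simpa [hψ₁h _ (inv_pos.2 (htpos _)), hψ₂h _ (inv_pos.2 (htpos _)), ← mul_sub, hu] using hscale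

lemma isBounded_range_of_sub_eq_one
    (hrefl : Function.Surjective (NormedSpace.inclusionInDoubleDual ℝ X)) (hα : 0 < α)
    (hφC : ContDiff ℝ 1 φ) (hψ₁C : ContDiff ℝ 1 ψ₁) (hψ₂C : ContDiff ℝ 1 ψ₂)
    (hφh : ∀ t : ℝ, 0 < t → ∀ u, φ (t • u) = t ^ α * φ u)
    (hψ₁h : ∀ t : ℝ, 0 < t → ∀ u, ψ₁ (t • u) = t ^ α * ψ₁ u)
    (hψ₂h : ∀ t : ℝ, 0 < t → ∀ u, ψ₂ (t • u) = t ^ α * ψ₂ u)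
    (hS : ∀ lam : ℝ, 0 < lam → ClassSPlus (fun u => fderiv ℝ φ u + lam • fderiv ℝ ψ₂ u))
    (hcc : CompletelyContinuous (fun u => fderiv ℝ ψ₁ u))
    (hpos : ∀ u : X, u ≠ 0 → 0 ≤ ψ₁ u - ψ₂ u → 0 < φ u) {u : ℕ → X} {c : ℝ}
    (hu : ∀ n, ψ₁ (u n) - ψ₂ (u n) = 1) (hφu : Tendsto (fun n => φ (u n)) atTop (𝓝 c)) :
    Bornology.IsBounded (Set.range u) := by
  by_contra hub
  obtain ⟨v, hv1, hφv, hψv⟩ := exists_norm_eq_one_of_not_isBounded hα hφh hψ₁h hψ₂h hu hφu hub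
  have hvb : Bornology.IsBounded (Set.range v) :=
    isBounded_iff_forall_norm_le.2 ⟨1, by rintro _ ⟨n, rfl⟩; exact (hv1 n).le⟩
  obtain ⟨τ, hτ, v₀, hv₀⟩ := exists_strictMono_weakConvSeq_of_isBounded hrefl hvb
  have hwb := hvb.subset (Set.range_comp_subset_range τ v)
  have hφw := hφv.comp hτ.tendsto_atTop
  have hψw := hψv.comp hτ.tendsto_atTop
  obtain ⟨hφv₀, hψv₀⟩ := nonpos_and_le_of_weakConvSeq hφC hψ₁C hψ₂C hS hcc hv₀ hwb hφw hψw
  obtain rfl : v₀ = 0 := by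
    by_contra hv₀0
    exact (hpos v₀ hv₀0 hψv₀).not_ge hφv₀
  have hψ₂w : Tendsto (fun n => ψ₂ (v (τ n))) atTop (𝓝 0) := by
    have hψ₁w := hv₀.tendsto_of_completelyContinuous_fderiv
      (hψ₁C.differentiable one_ne_zero) hcc hwb
    simpa [apply_zero_of_posHomogeneous hα.ne' hψ₁h] using hψ₁w.sub hψw
  have hlim := (tendsto_zero_of_weakConvSeq_zero hφC hψ₂C hφh hψ₂h (hS 1 one_pos) hv₀ hφw
    hψ₂w).norm
  simp only [hv1, norm_zero] at hlim
  exact one_ne_zero (tendsto_nhds_unique tendsto_const_nhds hlim)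

lemma pos_of_tendsto_of_sub_eq_one
    (hrefl : Function.Surjective (NormedSpace.inclusionInDoubleDual ℝ X)) (hα : α ≠ 0)
    (hφC : ContDiff ℝ 1 φ) (hψ₁C : ContDiff ℝ 1 ψ₁) (hψ₂C : ContDiff ℝ 1 ψ₂)
    (hψ₁h : ∀ t : ℝ, 0 < t → ∀ u, ψ₁ (t • u) = t ^ α * ψ₁ u)
    (hψ₂h : ∀ t : ℝ, 0 < t → ∀ u, ψ₂ (t • u) = t ^ α * ψ₂ u)
    (hS : ∀ lam : ℝ, 0 < lam → ClassSPlus (fun u => fderiv ℝ φ u + lam • fderiv ℝ ψ₂ u))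
    (hcc : CompletelyContinuous (fun u => fderiv ℝ ψ₁ u))
    (hpos : ∀ u : X, u ≠ 0 → 0 ≤ ψ₁ u - ψ₂ u → 0 < φ u) {u : ℕ → X} {c : ℝ}
    (hu : ∀ n, ψ₁ (u n) - ψ₂ (u n) = 1) (hub : Bornology.IsBounded (Set.range u))
    (hφu : Tendsto (fun n => φ (u n)) atTop (𝓝 c)) : 0 < c := by
  refine (ge_of_tendsto' hφu fun n => (pos_of_sub_eq_one hα hψ₁h hψ₂h hpos (hu n)).le).lt_of_ne
    fun hc => ?_
  subst hc
  obtain ⟨σ, hσ, v, hv⟩ := exists_strictMono_weakConvSeq_of_isBounded hrefl hub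
  obtain ⟨hφv, hψv⟩ := nonpos_and_le_of_weakConvSeq hφC hψ₁C hψ₂C hS hcc hv
    (hub.subset (Set.range_comp_subset_range σ u)) (hφu.comp hσ.tendsto_atTop)
    (a := 1) (by simp only [hu]; exact tendsto_const_nhds)
  have hv0 : 0 < ψ₁ v - ψ₂ v := one_pos.trans_le hψv
  exact (hpos v (ne_zero_of_sub_apply_ne_zero hα hψ₁h hψ₂h hv0.ne') hv0.le).not_ge hφv

lemma tendsto_of_tendsto_fderiv_sub_smul (hα : α ≠ 0) (hφC : ContDiff ℝ 1 φ)
    (hψ₁C : ContDiff ℝ 1 ψ₁) (hψ₂C : ContDiff ℝ 1 ψ₂)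
    (hφh : ∀ t : ℝ, 0 < t → ∀ u, φ (t • u) = t ^ α * φ u)
    (hψ₁h : ∀ t : ℝ, 0 < t → ∀ u, ψ₁ (t • u) = t ^ α * ψ₁ u)
    (hψ₂h : ∀ t : ℝ, 0 < t → ∀ u, ψ₂ (t • u) = t ^ α * ψ₂ u) {u : ℕ → X} {c : ℝ}
    (hu : ∀ n, ψ₁ (u n) - ψ₂ (u n) = 1) (hub : Bornology.IsBounded (Set.range u))
    (hφu : Tendsto (fun n => φ (u n)) atTop (𝓝 c)) {lam : ℕ → ℝ}
    (hE : Tendsto (fun n => fderiv ℝ φ (u n) - lam n • (fderiv ℝ ψ₁ (u n) - fderiv ℝ ψ₂ (u n)))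
      atTop (𝓝 0)) :
    Tendsto lam atTop (𝓝 c) := by
  obtain ⟨C, hC⟩ := isBounded_iff_forall_norm_le.1 hub
  set E := fun n => fderiv ℝ φ (u n) - lam n • (fderiv ℝ ψ₁ (u n) - fderiv ℝ ψ₂ (u n))
  have hEu : Tendsto (fun n => E n (u n)) atTop (𝓝 0) := by
    refine squeeze_zero_norm (fun n => ((E n).le_opNorm _).trans
      (mul_le_mul_of_nonneg_left (hC _ ⟨n, rfl⟩) (norm_nonneg _))) ?_
    simpa using (tendsto_zero_iff_norm_tendsto_zero.1 hE).mul_const C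
  have heuler : ∀ n, lam n = φ (u n) - E n (u n) / α := fun n => by
    have hd := fun (F : X → ℝ) (hF : ContDiff ℝ 1 F) => (hF.differentiable one_ne_zero) (u n)
    have hpair : E n (u n) = α * (φ (u n) - lam n) := by
      simp only [E, sub_apply, smul_apply, smul_eq_mul,
        fderiv_apply_self_of_posHomogeneous (hd φ hφC) hφh,
        fderiv_apply_self_of_posHomogeneous (hd ψ₁ hψ₁C) hψ₁h,
        fderiv_apply_self_of_posHomogeneous (hd ψ₂ hψ₂C) hψ₂h]
      linear_combination (-(α * lam n)) * hu n
    rw [hpair, mul_div_cancel_left₀ _ hα]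
    ring
  simpa [← heuler] using hφu.sub (hEu.div_const α)

end PalaisSmale

theorem stmt4_general {X : Type*} [NormedAddCommGroup X] [NormedSpace ℝ X]
    (hrefl : Function.Surjective (NormedSpace.inclusionInDoubleDual ℝ X))
    (φ ψ₁ ψ₂ : X → ℝ) (α : ℝ) (hα : 1 < α)
    (hφC : ContDiff ℝ 1 φ) (hψ₁C : ContDiff ℝ 1 ψ₁) (hψ₂C : ContDiff ℝ 1 ψ₂)
    (hφh : ∀ t : ℝ, 0 < t → ∀ u, φ (t • u) = t ^ α * φ u)
    (hψ₁h : ∀ t : ℝ, 0 < t → ∀ u, ψ₁ (t • u) = t ^ α * ψ₁ u)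
    (hψ₂h : ∀ t : ℝ, 0 < t → ∀ u, ψ₂ (t • u) = t ^ α * ψ₂ u)
    (hS : ∀ lam : ℝ, 0 < lam →
      ClassSPlus (fun u => fderiv ℝ φ u + lam • fderiv ℝ ψ₂ u))
    (hcc : CompletelyContinuous (fun u => fderiv ℝ ψ₁ u))
    (hpos : ∀ u : X, u ≠ 0 → 0 ≤ ψ₁ u - ψ₂ u → 0 < φ u) :
    BddBelow (φ '' {u : X | ψ₁ u - ψ₂ u = 1}) ∧
    ∀ (c : ℝ) (u : ℕ → X), (∀ n, ψ₁ (u n) - ψ₂ (u n) = 1) →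
      Tendsto (fun n => φ (u n)) atTop (𝓝 c) →
      Tendsto (fun n =>
          ⨅ lam : ℝ, ‖fderiv ℝ φ (u n) - lam • (fderiv ℝ ψ₁ (u n) - fderiv ℝ ψ₂ (u n))‖)
        atTop (𝓝 0) →
      ∃ σ : ℕ → ℕ, StrictMono σ ∧ ∃ v : X, Tendsto (fun k => u (σ k)) atTop (𝓝 v) := by
  have hα0 : 0 < α := zero_lt_one.trans hα
  refine ⟨⟨0, ?_⟩, fun c u hu hφu hgrad => ?_⟩
  · rintro _ ⟨u, hu, rfl⟩
    exact (pos_of_sub_eq_one hα0.ne' hψ₁h hψ₂h hpos hu).le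
  have hub := isBounded_range_of_sub_eq_one hrefl hα0 hφC hψ₁C hψ₂C hφh hψ₁h hψ₂h hS hcc hpos
    hu hφu
  have hc := pos_of_tendsto_of_sub_eq_one hrefl hα0.ne' hφC hψ₁C hψ₂C hψ₁h hψ₂h hS hcc hpos
    hu hub hφu
  obtain ⟨lam, hE⟩ := exists_seq_tendsto_of_tendsto_iInf (fun _ _ => norm_nonneg _) hgrad
  have hlam := tendsto_of_tendsto_fderiv_sub_smul hα0.ne' hφC hψ₁C hψ₂C hφh hψ₁h hψ₂h hu hub hφu
    (tendsto_zero_iff_norm_tendsto_zero.2 hE)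
  obtain ⟨σ, hσ, v, hv⟩ := exists_strictMono_weakConvSeq_of_isBounded hrefl hub
  have hwb := hub.subset (Set.range_comp_subset_range σ u)
  have hpair : Tendsto (fun n => (fderiv ℝ φ (u (σ n)) + lam (σ n) • fderiv ℝ ψ₂ (u (σ n)))
      (u (σ n) - v)) atTop (𝓝 0) := by
    have hEσ := hv.tendsto_apply_sub hwb
      ((tendsto_zero_iff_norm_tendsto_zero.2 hE).comp hσ.tendsto_atTop)
    have hψ₁σ := (hlam.comp hσ.tendsto_atTop).mul (hcc.tendsto_apply_sub hwb hv hwb)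
    have hsum := hEσ.add hψ₁σ
    rw [mul_zero, add_zero] at hsum
    refine hsum.congr fun n => ?_
    simp only [Function.comp, add_apply, sub_apply, smul_apply, smul_eq_mul]
    ring
  obtain ⟨ρ, hρ, hlim⟩ := exists_strictMono_tendsto_of_classSPlus hS hv hc
    (hlam.comp hσ.tendsto_atTop) hpair
  exact ⟨σ ∘ ρ, hσ.comp hρ, v, hlim⟩

theorem stmt4 {X : Type*} [NormedAddCommGroup X] [NormedSpace ℝ X] [CompleteSpace X]
    (hrefl : Function.Surjective (NormedSpace.inclusionInDoubleDual ℝ X))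
    (φ ψ₁ ψ₂ : X → ℝ) (α : ℝ) (hα : 1 < α)
    (hφC : ContDiff ℝ 1 φ) (hψ₁C : ContDiff ℝ 1 ψ₁) (hψ₂C : ContDiff ℝ 1 ψ₂)
    (hφe : ∀ u, φ (-u) = φ u) (hψ₁e : ∀ u, ψ₁ (-u) = ψ₁ u) (hψ₂e : ∀ u, ψ₂ (-u) = ψ₂ u)
    (hφh : ∀ t : ℝ, 0 < t → ∀ u, φ (t • u) = t ^ α * φ u)
    (hψ₁h : ∀ t : ℝ, 0 < t → ∀ u, ψ₁ (t • u) = t ^ α * ψ₁ u)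
    (hψ₂h : ∀ t : ℝ, 0 < t → ∀ u, ψ₂ (t • u) = t ^ α * ψ₂ u)
    (hS : ∀ lam : ℝ, 0 < lam →
      ClassSPlus (fun u => fderiv ℝ φ u + lam • fderiv ℝ ψ₂ u))
    (hcc : CompletelyContinuous (fun u => fderiv ℝ ψ₁ u))
    (hpos : ∀ u : X, u ≠ 0 → 0 ≤ ψ₁ u - ψ₂ u → 0 < φ u) :
    BddBelow (φ '' {u : X | ψ₁ u - ψ₂ u = 1}) ∧
    ∀ (c : ℝ) (u : ℕ → X), (∀ n, ψ₁ (u n) - ψ₂ (u n) = 1) →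
      Tendsto (fun n => φ (u n)) atTop (𝓝 c) →
      Tendsto (fun n =>
          ⨅ lam : ℝ, ‖fderiv ℝ φ (u n) - lam • (fderiv ℝ ψ₁ (u n) - fderiv ℝ ψ₂ (u n))‖)
        atTop (𝓝 0) →
      ∃ σ : ℕ → ℕ, StrictMono σ ∧ ∃ v : X, Tendsto (fun k => u (σ k)) atTop (𝓝 v) :=
  stmt4_general hrefl φ ψ₁ ψ₂ α hα hφC hψ₁C hψ₂C hφh hψ₁h hψ₂h hS hcc hpos
end

section
/- Let φ, ψ₁, ψ₂ : ℝ² → ℝ be defined by φ(u) = (u₁+u₂)²/2, ψ₁(u) = u₁²/2, ψ₂(u) = u₂²/2. Then the eigenvalue problem φ'(u) = λ(ψ₁'(u) − ψ₂'(u)), i.e. the system u₁+u₂ = λu₁ and u₁+u₂ = −λu₂, has no solution (u, λ) with ψ₁(u) − ψ₂(u) ≠ 0; moreover inf{φ(u) : ψ₁(u) − ψ₂(u) = 1} = 0 while φ(u) > 0 for all u with ψ₁(u) − ψ₂(u) ≠ 0. -/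
theorem stmt5 :
    (¬ ∃ (u : ℝ × ℝ) (lam : ℝ),
        u.1 + u.2 = lam * u.1 ∧ u.1 + u.2 = -lam * u.2 ∧
        u.1 ^ 2 / 2 - u.2 ^ 2 / 2 ≠ 0) ∧
    sInf {y : ℝ | ∃ u : ℝ × ℝ, u.1 ^ 2 / 2 - u.2 ^ 2 / 2 = 1 ∧ y = (u.1 + u.2) ^ 2 / 2} = 0 ∧
    (∀ u : ℝ × ℝ, u.1 ^ 2 / 2 - u.2 ^ 2 / 2 ≠ 0 → 0 < (u.1 + u.2) ^ 2 / 2) := by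
  refine ⟨?_, ?_, ?_⟩
  · rintro ⟨u, lam, h1, h2, h3⟩
    apply h3
    have hl : lam * (u.1 + u.2) = 0 := by nlinarith [h1, h2]
    rcases mul_eq_zero.1 hl with h | h
    · have h12 : u.1 + u.2 = 0 := by rw [h] at h1; linarith
      linear_combination (u.1 - u.2) / 2 * h12
    · linear_combination (u.1 - u.2) / 2 * h
  · set S : Set ℝ :=
      {y : ℝ | ∃ u : ℝ × ℝ, u.1 ^ 2 / 2 - u.2 ^ 2 / 2 = 1 ∧ y = (u.1 + u.2) ^ 2 / 2} with hS
    have hbdd : BddBelow S := by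
      refine ⟨0, fun y hy => ?_⟩
      obtain ⟨u, _, rfl⟩ := hy
      positivity
    have hmem : ∀ s : ℝ, 0 < s → (2 * s ^ 2) ∈ S := by
      intro s hs
      refine ⟨(s + 1 / (2 * s), s - 1 / (2 * s)), ?_, ?_⟩
      · field_simp
        ring
      · ring
    have hle : sInf S ≤ 0 := by
      apply le_of_forall_pos_le_add
      intro ε hε
      have hs : (0 : ℝ) < Real.sqrt ε / 2 := by positivity
      have h2 : 2 * (Real.sqrt ε / 2) ^ 2 = ε / 2 := by
        have := Real.sq_sqrt hε.le
        nlinarith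
      calc sInf S ≤ 2 * (Real.sqrt ε / 2) ^ 2 := csInf_le hbdd (hmem _ hs)
        _ = ε / 2 := h2
        _ ≤ 0 + ε := by linarith
    have hge : 0 ≤ sInf S := by
      apply le_csInf
      · exact ⟨2 * 1 ^ 2, hmem 1 one_pos⟩
      · rintro y ⟨u, _, rfl⟩
        positivity
    linarith
  · intro u h
    rcases lt_or_gt_of_ne (fun hz : (u.1 + u.2) ^ 2 / 2 = 0 => h (by nlinarith [sq_nonneg (u.1 + u.2)])) with h' | h'
    · nlinarith [sq_nonneg (u.1 + u.2)]
    · exact h'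
end

section
/- Let 𝒳 be a metrizable topological vector space with compatible translation-invariant metric, and let fₙ, f : 𝒳 → [0,+∞]. If f(u) ≤ (Γ-liminf fₙ)(u) for every u ≠ 0 and the sequence (fₙ) is asymptotically equicoercive (every sequence (u^{(k)}) with sup_k f^{(n_k)}(u^{(k)}) < ∞ along a strictly increasing (n_k) has a subsequence converging to some u ≠ 0), then for the sup-functionals ℛₘ(K) = sup_{u∈K} f(u) over compact symmetric sets K with index i(K) ≥ m, one has inf_{K∈𝒦ₘ} sup_{u∈K} f(u) ≤ liminf_n inf_{K∈𝒦ₘ} sup_{u∈K} fₙ(u) for every m ≥ 1. -/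
open Filter Topology ENNReal

/-!
If the minimax levels of `fseq n` stay below `b < ∞` along a subsequence `nₖ`, pick admissible
sets `Kₖ` on which `fseq nₖ < b`. Equicoercivity makes the Kuratowski upper limit `K∞` of the `Kₖ`
a nonempty compact symmetric set avoiding `0`; every neighborhood of `K∞` contains some `Kₖ`, so
neighborhood monotonicity gives `i(K∞) ≥ m`; and the Γ-liminf inequality gives `f ≤ b` on `K∞`.
-/

section UpperLimit

variable {X : Type*} [TopologicalSpace X]

/-- The Kuratowski upper limit of a sequence of sets. -/
def upperLimitSet (K : ℕ → Set X) : Set X :=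
  {u | ∃ σ : ℕ → ℕ, StrictMono σ ∧ ∃ v : ℕ → X, (∀ j, v j ∈ K (σ j)) ∧ Tendsto v atTop (𝓝 u)}

def AsymptoticallyCompact (K : ℕ → Set X) (S : Set X) : Prop :=
  ∀ τ : ℕ → ℕ, StrictMono τ → ∀ w : ℕ → X, (∀ i, w i ∈ K (τ i)) →
    ∃ σ : ℕ → ℕ, StrictMono σ ∧ ∃ u ∈ S, Tendsto (fun j => w (σ j)) atTop (𝓝 u)

variable {K : ℕ → Set X} {S : Set X}

theorem frequently_inter_nonempty_of_mem_upperLimitSet {u : X} (hu : u ∈ upperLimitSet K)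
    {U : Set X} (hU : U ∈ 𝓝 u) : ∃ᶠ k in atTop, (K k ∩ U).Nonempty := by
  obtain ⟨σ, hσ, v, hv, hvu⟩ := hu
  refine hσ.tendsto_atTop.frequently (Eventually.frequently ?_)
  filter_upwards [hvu hU] with j hj using ⟨v j, hv j, hj⟩

theorem AsymptoticallyCompact.exists_mem_upperLimitSet (hK : AsymptoticallyCompact K S)
    {τ : ℕ → ℕ} (hτ : StrictMono τ) {w : ℕ → X} (hw : ∀ i, w i ∈ K (τ i)) :
    ∃ σ : ℕ → ℕ, StrictMono σ ∧ ∃ u ∈ upperLimitSet K, Tendsto (fun j => w (σ j)) atTop (𝓝 u) := by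
  obtain ⟨σ, hσ, u, -, hwu⟩ := hK τ hτ w hw
  exact ⟨σ, hσ, u, ⟨τ ∘ σ, hτ.comp hσ, w ∘ σ, fun j => hw (σ j), hwu⟩, hwu⟩

theorem AsymptoticallyCompact.upperLimitSet_nonempty (hK : AsymptoticallyCompact K S)
    (hne : ∀ k, (K k).Nonempty) : (upperLimitSet K).Nonempty := by
  choose w hw using hne
  obtain ⟨-, -, u, hu, -⟩ := hK.exists_mem_upperLimitSet strictMono_id hw
  exact ⟨u, hu⟩

theorem AsymptoticallyCompact.upperLimitSet_subset [T2Space X] (hK : AsymptoticallyCompact K S) :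
    upperLimitSet K ⊆ S := by
  rintro u ⟨σ, hσ, v, hv, hvu⟩
  obtain ⟨σ', hσ', u', hu', hvu'⟩ := hK σ hσ v hv
  rwa [tendsto_nhds_unique (hvu.comp hσ'.tendsto_atTop) hvu']

theorem AsymptoticallyCompact.exists_subset_of_upperLimitSet_subset
    (hK : AsymptoticallyCompact K S) {U : Set X} (hU : IsOpen U) (hKU : upperLimitSet K ⊆ U) :
    ∃ k, K k ⊆ U := by
  by_contra! hout
  choose w hwK hwU using fun k => Set.not_subset.1 (hout k)
  obtain ⟨σ, -, u, hu, hwu⟩ := hK.exists_mem_upperLimitSet strictMono_id hwK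
  exact hU.isClosed_compl.mem_of_tendsto hwu (.of_forall fun j => hwU (σ j)) (hKU hu)

theorem AsymptoticallyCompact.isCompact_upperLimitSet [TopologicalSpace.PseudoMetrizableSpace X]
    (hK : AsymptoticallyCompact K S) : IsCompact (upperLimitSet K) := by
  let := TopologicalSpace.pseudoMetrizableSpacePseudoMetric X
  refine IsSeqCompact.isCompact fun x hx => ?_
  -- approximate each `x i` within `1/(i+1)` by a point of some `K (τ i)`, with `τ` increasing
  have hfreq : ∀ i, ∃ᶠ k in atTop, (K k ∩ Metric.ball (x i) (1 / (i + 1))).Nonempty := fun i =>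
    frequently_inter_nonempty_of_mem_upperLimitSet (hx i) (Metric.ball_mem_nhds _ (by positivity))
  obtain ⟨τ, hτ, hτK⟩ := extraction_forall_of_frequently hfreq
  choose w hwK hwx using hτK
  obtain ⟨σ, hσ, u, hu, hwu⟩ := hK.exists_mem_upperLimitSet hτ hwK
  refine ⟨u, hu, σ, hσ, hwu.congr_dist (squeeze_zero (fun _ => dist_nonneg) (fun j => ?_)
    (tendsto_one_div_add_atTop_nhds_zero_nat.comp hσ.tendsto_atTop))⟩
  exact (hwx (σ j)).le

theorem neg_mem_upperLimitSet_neg [InvolutiveNeg X] [ContinuousNeg X] {u : X}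
    (hu : u ∈ upperLimitSet K) : -u ∈ upperLimitSet (fun k => -K k) := by
  obtain ⟨σ, hσ, v, hv, hvu⟩ := hu
  exact ⟨σ, hσ, fun j => -v j, fun j => Set.neg_mem_neg.2 (hv j), hvu.neg⟩

theorem upperLimitSet_eq_neg [InvolutiveNeg X] [ContinuousNeg X] (hsymm : ∀ k, K k = -K k) :
    upperLimitSet K = -upperLimitSet K := by
  have hK : (fun k => -K k) = K := funext fun k => (hsymm k).symm
  ext u
  rw [Set.mem_neg]
  constructor
  · intro hu
    simpa only [hK] using neg_mem_upperLimitSet_neg hu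
  · intro hu
    simpa only [hK, neg_neg] using neg_mem_upperLimitSet_neg hu

end UpperLimit

section GammaLiminf

variable {X : Type*} [TopologicalSpace X]

noncomputable def gammaLiminf (g : ℕ → X → ℝ≥0∞) (u : X) : ℝ≥0∞ :=
  ⨆ (U : Set X) (_ : U ∈ 𝓝 u), liminf (fun n => ⨅ v ∈ U, g n v) atTop

theorem gammaLiminf_le_gammaLiminf_comp (g : ℕ → X → ℝ≥0∞) {φ : ℕ → ℕ} (hφ : StrictMono φ)
    (u : X) : gammaLiminf g u ≤ gammaLiminf (fun k => g (φ k)) u :=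
  iSup₂_mono fun U _ => hφ.tendsto_atTop.liminf_le_liminf_comp (u := fun n => ⨅ v ∈ U, g n v)

theorem gammaLiminf_le_of_mem_upperLimitSet {g : ℕ → X → ℝ≥0∞} {K : ℕ → Set X} {b : ℝ≥0∞}
    (hb : ∀ k, ∀ v ∈ K k, g k v ≤ b) {u : X} (hu : u ∈ upperLimitSet K) : gammaLiminf g u ≤ b := by
  obtain ⟨σ, hσ, v, hv, hvu⟩ := hu
  refine (gammaLiminf_le_gammaLiminf_comp g hσ u).trans (iSup₂_le fun U hU => ?_)
  refine liminf_le_of_frequently_le' (Eventually.frequently ?_)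
  filter_upwards [hvu hU] with j hj using (biInf_le (g (σ j)) hj).trans (hb _ _ (hv j))

end GammaLiminf

theorem stmt8_general {X : Type*} [AddCommGroup X] [TopologicalSpace X]
    [IsTopologicalAddGroup X] [TopologicalSpace.MetrizableSpace X]
    (idx : Set X → ℕ)
    -- neighborhood monotonicity of the index
    (hidx_nbhd : ∀ K : Set X, K.Nonempty → IsCompact K → K = -K → (0 : X) ∉ K →
      ∃ U : Set X, IsOpen U ∧ U ⊆ {x : X | x ≠ 0} ∧ K ⊆ U ∧
        ∀ K' : Set X, K'.Nonempty → IsCompact K' → K' = -K' → K' ⊆ U → idx K' ≤ idx K)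
    (f : X → ℝ≥0∞) (fseq : ℕ → X → ℝ≥0∞)
    -- Γ-liminf lower bound off the origin
    (hΓ : ∀ u : X, u ≠ 0 →
      f u ≤ ⨆ (U : Set X) (_ : U ∈ 𝓝 u),
        liminf (fun n => ⨅ v ∈ U, fseq n v) atTop)
    -- asymptotic equicoercivity
    (hec : ∀ nk : ℕ → ℕ, StrictMono nk → ∀ uk : ℕ → X,
      (⨆ k, fseq (nk k) (uk k)) < ⊤ →
      ∃ σ : ℕ → ℕ, StrictMono σ ∧ ∃ u : X, u ≠ 0 ∧
        Tendsto (fun j => uk (σ j)) atTop (𝓝 u)) :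
    ∀ m : ℕ, 1 ≤ m →
      (⨅ (K : Set X) (_ : K.Nonempty ∧ IsCompact K ∧ K = -K ∧ (0 : X) ∉ K ∧ m ≤ idx K),
        ⨆ u ∈ K, f u)
      ≤ liminf (fun n =>
          ⨅ (K : Set X) (_ : K.Nonempty ∧ IsCompact K ∧ K = -K ∧ (0 : X) ∉ K ∧ m ≤ idx K),
            ⨆ u ∈ K, fseq n u) atTop := by
  intro m _
  refine le_of_forall_gt_imp_ge_of_dense fun b hb => ?_
  obtain rfl | hbtop := eq_or_ne b ⊤
  · exact le_top
  obtain ⟨nk, hnk, hnkb⟩ :=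
    extraction_of_frequently_atTop (frequently_lt_of_liminf_lt (by isBoundedDefault) hb)
  simp only [iInf_lt_iff, exists_prop] at hnkb
  choose K hK hKb using hnkb
  have hKb' : ∀ k, ∀ v ∈ K k, fseq (nk k) v ≤ b := fun k v hv => (le_biSup _ hv).trans (hKb k).le
  have hcpt : AsymptoticallyCompact K {0}ᶜ := fun τ hτ w hw =>
    hec _ (hnk.comp hτ) w ((iSup_le fun i => hKb' _ _ (hw i)).trans_lt hbtop.lt_top)
  set L := upperLimitSet K
  have hL0 : (0 : X) ∉ L := fun h => hcpt.upperLimitSet_subset h rfl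
  have hLne := hcpt.upperLimitSet_nonempty fun k => (hK k).1
  have hLsymm := upperLimitSet_eq_neg fun k => (hK k).2.2.1
  obtain ⟨U, hUo, -, hLU, hUidx⟩ := hidx_nbhd L hLne hcpt.isCompact_upperLimitSet hLsymm hL0
  obtain ⟨k, hkU⟩ := hcpt.exists_subset_of_upperLimitSet_subset hUo hLU
  have hLidx : m ≤ idx L := (hK k).2.2.2.2.trans (hUidx _ (hK k).1 (hK k).2.1 (hK k).2.2.1 hkU)
  refine (iInf₂_le L ⟨hLne, hcpt.isCompact_upperLimitSet, hLsymm, hL0, hLidx⟩).trans ?_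
  refine iSup₂_le fun u hu => (hΓ u fun h => hL0 (h ▸ hu)).trans ?_
  exact (gammaLiminf_le_gammaLiminf_comp fseq hnk u).trans
    (gammaLiminf_le_of_mem_upperLimitSet hKb' hu)

theorem stmt8 {X : Type*} [AddCommGroup X] [Module ℝ X] [TopologicalSpace X]
    [IsTopologicalAddGroup X] [ContinuousSMul ℝ X] [TopologicalSpace.MetrizableSpace X]
    (idx : Set X → ℕ)
    -- the index of a nonempty compact symmetric set avoiding 0 is at least 1
    (hidx_pos : ∀ K : Set X, K.Nonempty → IsCompact K → K = -K → (0 : X) ∉ K → 1 ≤ idx K)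
    -- neighborhood monotonicity of the index
    (hidx_nbhd : ∀ K : Set X, K.Nonempty → IsCompact K → K = -K → (0 : X) ∉ K →
      ∃ U : Set X, IsOpen U ∧ U ⊆ {x : X | x ≠ 0} ∧ K ⊆ U ∧
        ∀ K' : Set X, K'.Nonempty → IsCompact K' → K' = -K' → K' ⊆ U → idx K' ≤ idx K)
    -- subadditivity
    (hidx_add : ∀ K₁ K₂ : Set X,
      K₁.Nonempty → IsCompact K₁ → K₁ = -K₁ → (0 : X) ∉ K₁ →
      K₂.Nonempty → IsCompact K₂ → K₂ = -K₂ → (0 : X) ∉ K₂ →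
      idx (K₁ ∪ K₂) ≤ idx K₁ + idx K₂)
    -- monotonicity under continuous odd maps
    (hidx_odd : ∀ (K : Set X) (pimap : X → X),
      K.Nonempty → IsCompact K → K = -K → (0 : X) ∉ K →
      ContinuousOn pimap K → (∀ u ∈ K, pimap (-u) = -pimap u) → (∀ u ∈ K, pimap u ≠ 0) →
      idx K ≤ idx (pimap '' K))
    (f : X → ℝ≥0∞) (fseq : ℕ → X → ℝ≥0∞)
    -- Γ-liminf lower bound off the origin
    (hΓ : ∀ u : X, u ≠ 0 →
      f u ≤ ⨆ (U : Set X) (_ : U ∈ 𝓝 u),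
        liminf (fun n => ⨅ v ∈ U, fseq n v) atTop)
    -- asymptotic equicoercivity
    (hec : ∀ nk : ℕ → ℕ, StrictMono nk → ∀ uk : ℕ → X,
      (⨆ k, fseq (nk k) (uk k)) < ⊤ →
      ∃ σ : ℕ → ℕ, StrictMono σ ∧ ∃ u : X, u ≠ 0 ∧
        Tendsto (fun j => uk (σ j)) atTop (𝓝 u)) :
    ∀ m : ℕ, 1 ≤ m →
      (⨅ (K : Set X) (_ : K.Nonempty ∧ IsCompact K ∧ K = -K ∧ (0 : X) ∉ K ∧ m ≤ idx K),
        ⨆ u ∈ K, f u)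
      ≤ liminf (fun n =>
          ⨅ (K : Set X) (_ : K.Nonempty ∧ IsCompact K ∧ K = -K ∧ (0 : X) ∉ K ∧ m ≤ idx K),
            ⨆ u ∈ K, fseq n u) atTop :=
  stmt8_general idx hidx_nbhd f fseq hΓ hec
end

section
/- Let 𝒳 be a metrizable locally convex TVS with a distance d as above (symmetric under negation, convex balls). For every nonempty compact symmetric K ⊆ 𝒳∖{0} and every r > 0, there exist a finite symmetric subset F of K and a continuous map (v,u) ↦ ϑ_v(u) from F × 𝒳 to [0,1] such that ϑ_v(u) = 0 whenever d(u,v) ≥ r, Σ_{v∈F} ϑ_v(u) = 1 for all u ∈ K, Σ_{v∈F} ϑ_v(u) ≤ 1 for all u ∈ 𝒳, and ϑ_{−v}(u) = ϑ_v(−u) for all v ∈ F, u ∈ 𝒳. -/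
/-!
Cover `K` by finitely many `d`-balls of radius `r / 2` centred in `K` and add the negatives of
the centres. The tents `max (r - d u v) 0` at these centres are continuous and supported in the
`r`-balls; dividing them by `max (∑ tents) (r / 2)` gives functions with sum at most one, and
exactly one on `K`, where some tent exceeds `r / 2`. Since the set of centres is symmetric and
`d` is invariant under negation, the denominator is an even function, whence `ϑ_{-v}(u) = ϑ_v(-u)`.
-/

open Filter Topology

section Normalize

variable {X ι : Type*} (s : Finset ι) (f : ι → X → ℝ) (c : ℝ)

noncomputable def normalizedFamily (i : ι) (u : X) : ℝ :=
  f i u / max (∑ j ∈ s, f j u) c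

variable {s f c}

lemma normalizedFamily_continuous [TopologicalSpace X] (hc : 0 < c)
    (hf : ∀ j ∈ s, Continuous (f j)) {i : ι} (hi : Continuous (f i)) :
    Continuous (normalizedFamily s f c i) :=
  hi.div ((continuous_finsetSum s hf).max continuous_const)
    fun _ => (hc.trans_le (le_max_right _ _)).ne'

lemma normalizedFamily_nonneg (hc : 0 < c) {i : ι} {u : X} (hfi : 0 ≤ f i u) :
    0 ≤ normalizedFamily s f c i u :=
  div_nonneg hfi (hc.le.trans (le_max_right _ _))

lemma sum_normalizedFamily_le_one (hc : 0 < c) (u : X) :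
    ∑ i ∈ s, normalizedFamily s f c i u ≤ 1 := by
  simp_rw [normalizedFamily, ← Finset.sum_div]
  rw [div_le_one (hc.trans_le (le_max_right _ _))]
  exact le_max_left _ _

lemma normalizedFamily_le_one (hc : 0 < c) (hf : ∀ j ∈ s, ∀ u, 0 ≤ f j u) {i : ι} (hi : i ∈ s)
    (u : X) : normalizedFamily s f c i u ≤ 1 :=
  calc normalizedFamily s f c i u
      ≤ ∑ j ∈ s, normalizedFamily s f c j u :=
        Finset.single_le_sum (fun j hj => normalizedFamily_nonneg hc (hf j hj u)) hi
    _ ≤ 1 := sum_normalizedFamily_le_one hc u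

lemma sum_normalizedFamily_eq_one (hc : 0 < c) {u : X} (hu : c ≤ ∑ j ∈ s, f j u) :
    ∑ i ∈ s, normalizedFamily s f c i u = 1 := by
  simp_rw [normalizedFamily, ← Finset.sum_div]
  rw [max_eq_left hu, div_self (hc.trans_le hu).ne']

lemma normalizedFamily_neg [InvolutiveNeg ι] [InvolutiveNeg X] (hs : ∀ i ∈ s, -i ∈ s)
    (hf : ∀ i u, f (-i) u = f i (-u)) (i : ι) (u : X) :
    normalizedFamily s f c (-i) u = normalizedFamily s f c i (-u) := by
  have hsum : ∑ j ∈ s, f j u = ∑ j ∈ s, f j (-u) :=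
    Finset.sum_equiv (Equiv.neg ι)
      (fun j => ⟨hs j, fun h => by simpa using hs _ h⟩) (fun j _ => by simp [hf])
  simp only [normalizedFamily, hf, hsum]

end Normalize

section Symmetrize

open Pointwise

variable {α : Type*} [DecidableEq α] [InvolutiveNeg α]

lemma Finset.neg_mem_union_neg (t : Finset α) {a : α} (ha : a ∈ t ∪ -t) : -a ∈ t ∪ -t := by
  simp only [Finset.mem_union, Finset.mem_neg] at ha ⊢
  rcases ha with ha | ⟨b, hb, rfl⟩
  · exact Or.inr ⟨a, ha, rfl⟩
  · exact Or.inl (by simpa using hb)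

lemma Finset.coe_union_neg_subset {t : Finset α} {K : Set α} (ht : ↑t ⊆ K) (hK : K = -K) :
    ↑(t ∪ -t) ⊆ K := by
  rw [Finset.coe_union, Finset.coe_neg, Set.union_subset_iff]
  exact ⟨ht, hK ▸ Set.neg_subset_neg.2 ht⟩

end Symmetrize

section Distance

variable {X : Type*} {d : X → X → ℝ}

lemma continuous_left_of_hasBasis [TopologicalSpace X]
    (hdsymm : ∀ u v : X, d u v = d v u) (hdtri : ∀ u v w : X, d u w ≤ d u v + d v w)
    (hdtop : ∀ u : X, (𝓝 u).HasBasis (fun r : ℝ => 0 < r) (fun r => {v : X | d v u < r}))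
    (v : X) : Continuous fun u => d u v := by
  refine continuous_iff_continuousAt.2 fun u => Metric.tendsto_nhds.2 fun ε hε => ?_
  filter_upwards [(hdtop u).mem_of_mem hε] with u' hu'
  have hu'u : d u' u < ε := hu'
  have h₁ := hdtri u' u v
  have h₂ := hdtri u u' v
  rw [Real.dist_eq, abs_sub_lt_iff]
  constructor <;> linarith [hdsymm u u']

noncomputable def tent (d : X → X → ℝ) (r : ℝ) (v u : X) : ℝ :=
  max (r - d u v) 0

lemma tent_nonneg (r : ℝ) (v u : X) : 0 ≤ tent d r v u :=
  le_max_right _ _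

lemma tent_eq_zero {r : ℝ} {v u : X} (h : r ≤ d u v) : tent d r v u = 0 :=
  max_eq_right (sub_nonpos.2 h)

lemma half_lt_tent {r : ℝ} {v u : X} (h : d u v < r / 2) : r / 2 < tent d r v u :=
  lt_max_of_lt_left (by linarith)

lemma continuous_tent [TopologicalSpace X] (r : ℝ) {v : X} (hv : Continuous fun u => d u v) :
    Continuous (tent d r v) :=
  (continuous_const.sub hv).max continuous_const

lemma tent_neg [InvolutiveNeg X] (hdneg : ∀ u v : X, d (-u) (-v) = d u v) (r : ℝ) (v u : X) :
    tent d r (-v) u = tent d r v (-u) := by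
  rw [tent, tent, ← hdneg, neg_neg]

end Distance

theorem stmt10_general {X : Type*} [AddCommGroup X] [TopologicalSpace X]
    (d : X → X → ℝ)
    (hdsymm : ∀ u v : X, d u v = d v u)
    (hdtri : ∀ u v w : X, d u w ≤ d u v + d v w)
    (hdtop : ∀ u : X, (𝓝 u).HasBasis (fun r : ℝ => 0 < r) (fun r => {v : X | d v u < r}))
    (hdneg : ∀ u v : X, d (-u) (-v) = d u v)
    (K : Set X) (hKne : K.Nonempty) (hKc : IsCompact K) (hKsymm : K = -K)
    (r : ℝ) (hr : 0 < r) :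
    ∃ F : Finset X, F.Nonempty ∧ (↑F : Set X) ⊆ K ∧ (∀ v ∈ F, -v ∈ F) ∧
      ∃ ϑ : X → X → ℝ,
        (∀ v ∈ F, Continuous (ϑ v)) ∧
        (∀ v ∈ F, ∀ u : X, 0 ≤ ϑ v u ∧ ϑ v u ≤ 1) ∧
        (∀ v ∈ F, ∀ u : X, r ≤ d u v → ϑ v u = 0) ∧
        (∀ u ∈ K, ∑ v ∈ F, ϑ v u = 1) ∧
        (∀ u : X, ∑ v ∈ F, ϑ v u ≤ 1) ∧
        (∀ v ∈ F, ∀ u : X, ϑ (-v) u = ϑ v (-u)) := by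
  classical
  have hr2 : 0 < r / 2 := half_pos hr
  obtain ⟨t, htK, hcov⟩ := hKc.elim_nhds_subcover (fun v => {u : X | d u v < r / 2})
    fun v _ => (hdtop v).mem_of_mem hr2
  have hnear : ∀ u ∈ K, ∃ v ∈ t, d u v < r / 2 := fun u hu => by
    simpa using hcov hu
  open Pointwise in set F := t ∪ -t
  have hcont : ∀ v, Continuous (tent d r v) := fun v =>
    continuous_tent r (continuous_left_of_hasBasis hdsymm hdtri hdtop v)
  have hKsum : ∀ u ∈ K, r / 2 ≤ ∑ v ∈ F, tent d r v u := fun u hu => by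
    obtain ⟨v, hv, hduv⟩ := hnear u hu
    exact (half_lt_tent hduv).le.trans
      (Finset.single_le_sum (fun w _ => tent_nonneg r w u) (Finset.mem_union_left _ hv))
  obtain ⟨u, hu⟩ := hKne
  obtain ⟨v, hv, -⟩ := hnear u hu
  refine ⟨F, ⟨v, Finset.mem_union_left _ hv⟩, Finset.coe_union_neg_subset htK hKsymm,
    fun v => t.neg_mem_union_neg, normalizedFamily F (tent d r) (r / 2), ?_, ?_, ?_, ?_, ?_, ?_⟩
  · exact fun v _ => normalizedFamily_continuous hr2 (fun w _ => hcont w) (hcont v)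
  · exact fun v hv u => ⟨normalizedFamily_nonneg hr2 (tent_nonneg r v u),
      normalizedFamily_le_one hr2 (fun w _ => tent_nonneg r w) hv u⟩
  · intro v _ u h
    rw [normalizedFamily, tent_eq_zero h, zero_div]
  · exact fun u hu => sum_normalizedFamily_eq_one hr2 (hKsum u hu)
  · exact sum_normalizedFamily_le_one hr2
  · exact fun v _ => normalizedFamily_neg (fun w => t.neg_mem_union_neg) (tent_neg hdneg r) v

theorem stmt10 {X : Type*} [AddCommGroup X] [Module ℝ X] [TopologicalSpace X]
    [IsTopologicalAddGroup X] [ContinuousSMul ℝ X] [LocallyConvexSpace ℝ X]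
    (d : X → X → ℝ)
    (hd0 : ∀ u v : X, 0 ≤ d u v)
    (hdeq : ∀ u v : X, d u v = 0 ↔ u = v)
    (hdsymm : ∀ u v : X, d u v = d v u)
    (hdtri : ∀ u v w : X, d u w ≤ d u v + d v w)
    (hdtop : ∀ u : X, (𝓝 u).HasBasis (fun r : ℝ => 0 < r) (fun r => {v : X | d v u < r}))
    (hdneg : ∀ u v : X, d (-u) (-v) = d u v)
    (hdconv : ∀ (u : X) (r : ℝ), Convex ℝ {v : X | d v u < r})
    (K : Set X) (hKne : K.Nonempty) (hKc : IsCompact K) (hKsymm : K = -K)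
    (hK0 : (0 : X) ∉ K) (r : ℝ) (hr : 0 < r) :
    ∃ F : Finset X, F.Nonempty ∧ (↑F : Set X) ⊆ K ∧ (∀ v ∈ F, -v ∈ F) ∧
      ∃ ϑ : X → X → ℝ,
        (∀ v ∈ F, Continuous (ϑ v)) ∧
        (∀ v ∈ F, ∀ u : X, 0 ≤ ϑ v u ∧ ϑ v u ≤ 1) ∧
        (∀ v ∈ F, ∀ u : X, r ≤ d u v → ϑ v u = 0) ∧
        (∀ u ∈ K, ∑ v ∈ F, ϑ v u = 1) ∧
        (∀ u : X, ∑ v ∈ F, ϑ v u ≤ 1) ∧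
        (∀ v ∈ F, ∀ u : X, ϑ (-v) u = ϑ v (-u)) :=
  stmt10_general d hdsymm hdtri hdtop hdneg K hKne hKc hKsymm r hr
end

section
/- If μ(B) = ∫|u|^p dμ can be expressed as ∫₀^∞ μ({|u| > y^{1/p}}) dℒ¹(y) via Cavalieri's principle, and if ∫|u|^p dμ₁ ≤ ∫|u|^p dμ₂ holds for all u ∈ W^{1,p}_{loc}(ℝ^N), then μ₁(A) ≤ μ₂(A) for every Borel p-quasi open A. In particular, two p-capacitary measures μ₁, μ₂ with ∫|u|^p dμ₁ = ∫|u|^p dμ₂ for all u ∈ W^{1,p}_{loc} agree on all Borel p-quasi open sets. -/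
open MeasureTheory Filter Topology ENNReal

/-- The `p`-capacity of a set `S ⊆ ℝ^N`, defined via the Sobolev-type energy of
admissible functions `0 ≤ u ≤ 1` equal to `1` on an open neighborhood of `S`
(with `inf ∅ = +∞`). -/
noncomputable def pCap (N : ℕ) (p : ℝ) (S : Set (EuclideanSpace ℝ (Fin N))) : ℝ≥0∞ :=
  ⨅ (u : EuclideanSpace ℝ (Fin N) → ℝ) (_ : Differentiable ℝ u)
    (_ : ∀ x, 0 ≤ u x ∧ u x ≤ 1)
    (_ : ∃ O : Set (EuclideanSpace ℝ (Fin N)), IsOpen O ∧ S ⊆ O ∧ ∀ x ∈ O, u x = 1),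
    ∫⁻ x, ENNReal.ofReal (‖fderiv ℝ u x‖ ^ p + |u x| ^ p)

/-- A set `A` is `p`-quasi open if for every `ε > 0` there is an open set `ω` of
`p`-capacity smaller than `ε` with `A ∪ ω` open. -/
def IsQuasiOpen (N : ℕ) (p : ℝ) (A : Set (EuclideanSpace ℝ (Fin N))) : Prop :=
  ∀ ε : ℝ≥0∞, 0 < ε → ∃ ω : Set (EuclideanSpace ℝ (Fin N)),
    IsOpen ω ∧ pCap N p ω < ε ∧ IsOpen (A ∪ ω)


/-!
On an open set `U`, take a smooth `w ≥ 0` with support `U` and compose it with smooth steps: the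
functions `z` that are `1` on `{w ≥ 2/n}` and vanish off `U` satisfy
`μ {w ≥ 2/n} ≤ ∫|z|^p dμ ≤ ∫|z|^p dν ≤ ν U`, so `μ U ≤ ν U` by letting `n → ∞`.
A quasi open set `A` differs from the open set `U = ⋃ₙ (A ∪ ωₙ) ∩ {uₙ < 1}` (with `uₙ` almost
optimal for the capacity of `ωₙ`) by a set lying in every `{uₙ ≥ 1}`; composing `uₙ` with a step
shows that this set has capacity zero, hence is `μ`-null.
-/

open Set Real

theorem Real.smoothTransition.exists_abs_deriv_le : ∃ C, ∀ t, |deriv smoothTransition t| ≤ C := by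
  have hcont : Continuous (deriv smoothTransition) :=
    (smoothTransition.contDiff (n := 1)).continuous_deriv le_rfl
  have hsupp : HasCompactSupport (deriv smoothTransition) := by
    refine HasCompactSupport.intro (isCompact_Icc (a := 0) (b := 1)) fun x hx => ?_
    rcases not_and_or.mp hx with hx | hx
    · have hloc : smoothTransition =ᶠ[𝓝 x] fun _ => 0 :=
        eventually_of_mem (Iio_mem_nhds (not_le.mp hx)) fun y hy =>
          smoothTransition.zero_of_nonpos hy.le
      rw [hloc.deriv_eq, deriv_const]
    · have hloc : smoothTransition =ᶠ[𝓝 x] fun _ => 1 :=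
        eventually_of_mem (Ioi_mem_nhds (not_le.mp hx)) fun y hy =>
          smoothTransition.one_of_one_le hy.le
      rw [hloc.deriv_eq, deriv_const]
  simpa only [Real.norm_eq_abs] using hcont.bounded_above_of_compact_support hsupp

section LevelSets

variable {X : Type*} [MeasurableSpace X] {p : ℝ} {z : X → ℝ}

theorem measure_le_lintegral_rpow_of_eq_one (μ : Measure X) (hz : Measurable z) {S : Set X}
    (hS : ∀ x ∈ S, z x = 1) : μ S ≤ ∫⁻ x, ENNReal.ofReal (|z x| ^ p) ∂μ := by
  have hf : Measurable fun x => ENNReal.ofReal (|z x| ^ p) := by fun_prop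
  calc μ S ≤ μ {x | 1 ≤ ENNReal.ofReal (|z x| ^ p)} :=
        measure_mono fun x hx => by simp [hS x hx]
    _ ≤ ∫⁻ x, ENNReal.ofReal (|z x| ^ p) ∂μ := by
        simpa using mul_meas_ge_le_lintegral₀ hf.aemeasurable 1

theorem lintegral_rpow_le_measure_support (hp : 0 < p) (μ : Measure X) (hz : Measurable z)
    (hz1 : ∀ x, |z x| ≤ 1) :
    ∫⁻ x, ENNReal.ofReal (|z x| ^ p) ∂μ ≤ μ (Function.support z) := by
  have hsupp : MeasurableSet (Function.support z) := hz (measurableSet_singleton 0).compl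
  rw [← lintegral_indicator_one hsupp]
  refine lintegral_mono fun x => ?_
  by_cases hx : z x = 0
  · simp [hx, zero_rpow hp.ne']
  · rw [indicator_of_mem (show x ∈ Function.support z from hx), Pi.one_apply]
    exact ENNReal.ofReal_le_one.mpr (rpow_le_one (abs_nonneg _) (hz1 x) hp.le)

end LevelSets

section FiniteDimensional

variable {E : Type*} [NormedAddCommGroup E] [NormedSpace ℝ E] {p : ℝ}

theorem IsOpen.measure_le_of_lintegral_rpow_le [FiniteDimensional ℝ E] [MeasurableSpace E]
    [BorelSpace E] (hp : 0 < p) {μ ν : Measure E}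
    (hle : ∀ u : E → ℝ, Differentiable ℝ u →
      ∫⁻ x, ENNReal.ofReal (|u x| ^ p) ∂μ ≤ ∫⁻ x, ENNReal.ofReal (|u x| ^ p) ∂ν)
    {U : Set E} (hU : IsOpen U) : μ U ≤ ν U := by
  obtain ⟨w, hwU, hw, hw01⟩ := hU.exists_contDiff_support_eq (n := 1)
  have hw0 : ∀ x, 0 ≤ w x := fun x => (hw01 (mem_range_self x)).1
  let z (n : ℕ) (x : E) : ℝ := smoothTransition (n * w x - 1)
  have hz (n : ℕ) : Differentiable ℝ (z n) :=
    (smoothTransition.contDiff (n := 1)).differentiable one_ne_zero |>.comp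
      (((differentiable_const _).mul (hw.differentiable one_ne_zero)).sub_const 1)
  have hlevel (n : ℕ) : μ {x | 2 ≤ n * w x} ≤ ν U := calc
    μ {x | 2 ≤ n * w x} ≤ ∫⁻ x, ENNReal.ofReal (|z n x| ^ p) ∂μ :=
        measure_le_lintegral_rpow_of_eq_one μ (hz n).continuous.measurable
          fun x hx => smoothTransition.one_of_one_le (by linarith [show (2 : ℝ) ≤ n * w x from hx])
    _ ≤ ∫⁻ x, ENNReal.ofReal (|z n x| ^ p) ∂ν := hle _ (hz n)
    _ ≤ ν (Function.support (z n)) :=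
        lintegral_rpow_le_measure_support hp ν (hz n).continuous.measurable fun x =>
          abs_le.mpr ⟨by linarith [smoothTransition.nonneg (n * w x - 1)],
            smoothTransition.le_one _⟩
    _ ≤ ν U := measure_mono fun x hx => by
        rw [← hwU]
        intro hwx
        exact hx (smoothTransition.zero_of_nonpos (by simp [hwx]))
  have hmono : Monotone fun n : ℕ => {x | 2 ≤ n * w x} := fun m n hmn x hx =>
    le_trans hx (mul_le_mul_of_nonneg_right (Nat.cast_le.mpr hmn) (hw0 x))
  have hunion : ⋃ n : ℕ, {x | 2 ≤ n * w x} = U := by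
    ext x
    simp only [mem_iUnion, mem_ofPred_eq, ← hwU, Function.mem_support]
    refine ⟨fun ⟨n, hn⟩ hwx => by norm_num [hwx] at hn, fun hwx => ?_⟩
    obtain ⟨n, hn⟩ := exists_nat_gt (2 / w x)
    exact ⟨n, ((div_lt_iff₀ (lt_of_le_of_ne (hw0 x) (Ne.symm hwx))).mp hn).le⟩
  calc μ U = ⨆ n : ℕ, μ {x | 2 ≤ n * w x} := by rw [← hmono.measure_iUnion, hunion]
    _ ≤ ν U := iSup_le hlevel

end FiniteDimensional

section Energy

variable {E : Type*} [NormedAddCommGroup E] [NormedSpace ℝ E] [MeasureSpace E]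

noncomputable def pEnergy (p : ℝ) (u : E → ℝ) : ℝ≥0∞ :=
  ∫⁻ x, ENNReal.ofReal (‖fderiv ℝ u x‖ ^ p + |u x| ^ p)

theorem pEnergy_comp_le {p : ℝ} (hp : 0 ≤ p) {φ : ℝ → ℝ} {u : E → ℝ} (hφ : Differentiable ℝ φ)
    (hu : Differentiable ℝ u) {K : ℝ} (hφ' : ∀ t, |deriv φ t| ≤ K) (hφK : ∀ t, |φ t| ≤ K * |t|) :
    pEnergy p (φ ∘ u) ≤ ENNReal.ofReal (K ^ p) * pEnergy p u := by
  have hK : 0 ≤ K := (abs_nonneg _).trans (hφ' 0)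
  rw [pEnergy, pEnergy, ← lintegral_const_mul' _ _ ENNReal.ofReal_ne_top]
  refine lintegral_mono fun x => ?_
  rw [← ENNReal.ofReal_mul (by positivity)]
  refine ENNReal.ofReal_le_ofReal ?_
  have hD : fderiv ℝ (φ ∘ u) x = deriv φ (u x) • fderiv ℝ u x :=
    ((hφ (u x)).hasDerivAt.comp_hasFDerivAt x (hu x).hasFDerivAt).fderiv
  have hDle : ‖fderiv ℝ (φ ∘ u) x‖ ≤ K * ‖fderiv ℝ u x‖ := by
    rw [hD, norm_smul, Real.norm_eq_abs]
    exact mul_le_mul_of_nonneg_right (hφ' _) (norm_nonneg _)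
  calc ‖fderiv ℝ (φ ∘ u) x‖ ^ p + |φ (u x)| ^ p
      ≤ (K * ‖fderiv ℝ u x‖) ^ p + (K * |u x|) ^ p :=
        add_le_add (rpow_le_rpow (norm_nonneg _) hDle hp) (rpow_le_rpow (abs_nonneg _) (hφK _) hp)
    _ = K ^ p * (‖fderiv ℝ u x‖ ^ p + |u x| ^ p) := by
        rw [mul_rpow hK (norm_nonneg _), mul_rpow hK (abs_nonneg _)]
        ring

end Energy

section Capacity

variable {N : ℕ} {p : ℝ}

theorem pCap_le_pEnergy {S : Set (EuclideanSpace ℝ (Fin N))} {u : EuclideanSpace ℝ (Fin N) → ℝ}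
    (hu : Differentiable ℝ u) (hu01 : ∀ x, 0 ≤ u x ∧ u x ≤ 1)
    (hS : ∃ O, IsOpen O ∧ S ⊆ O ∧ ∀ x ∈ O, u x = 1) : pCap N p S ≤ pEnergy p u :=
  iInf_le_of_le u <| iInf_le_of_le hu <| iInf_le_of_le hu01 <| iInf_le _ hS

theorem exists_pEnergy_lt_of_pCap_lt {S : Set (EuclideanSpace ℝ (Fin N))} {ε : ℝ≥0∞}
    (h : pCap N p S < ε) : ∃ u : EuclideanSpace ℝ (Fin N) → ℝ, Differentiable ℝ u ∧
      (∀ x, 0 ≤ u x ∧ u x ≤ 1) ∧ (∃ O, IsOpen O ∧ S ⊆ O ∧ ∀ x ∈ O, u x = 1) ∧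
      pEnergy p u < ε := by
  simpa only [pCap, iInf_lt_iff, exists_prop, pEnergy] using h

/-- Composing with `t ↦ smoothTransition (3 t - 1)` makes `u` equal to `1` on the open
neighbourhood `{u > 2/3}` of `{u ≥ 1}`. -/
theorem exists_pCap_le_mul_pEnergy (hp : 0 ≤ p) : ∃ K : ℝ, ∀ (S : Set (EuclideanSpace ℝ (Fin N)))
    (u : EuclideanSpace ℝ (Fin N) → ℝ), Differentiable ℝ u → S ⊆ {x | 1 ≤ u x} →
      pCap N p S ≤ ENNReal.ofReal (K ^ p) * pEnergy p u := by
  obtain ⟨C, hC⟩ := smoothTransition.exists_abs_deriv_le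
  let φ (t : ℝ) : ℝ := smoothTransition (3 * t - 1)
  have hφ' (t : ℝ) : HasDerivAt φ (deriv smoothTransition (3 * t - 1) * 3) t := by
    have hlin : HasDerivAt (fun t : ℝ => 3 * t - 1) 3 t := by
      simpa using ((hasDerivAt_id t).const_mul 3).sub_const 1
    exact ((smoothTransition.contDiff (n := 1)).differentiable one_ne_zero _).hasDerivAt.comp t hlin
  have hφ : Differentiable ℝ φ := fun t => (hφ' t).differentiableAt
  refine ⟨3 * max C 1, fun S u hu hS => ?_⟩
  have hφu : Differentiable ℝ (φ ∘ u) := hφ.comp hu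
  calc pCap N p S ≤ pEnergy p (φ ∘ u) := by
        refine pCap_le_pEnergy hφu (fun x => ⟨smoothTransition.nonneg _, smoothTransition.le_one _⟩)
          ⟨{x | 2 / 3 < u x}, isOpen_lt continuous_const hu.continuous, fun x hx => ?_,
            fun x hx => smoothTransition.one_of_one_le ?_⟩
        · exact lt_of_lt_of_le (by norm_num) (show 1 ≤ u x from hS hx)
        · linarith [show 2 / 3 < u x from hx]
    _ ≤ ENNReal.ofReal ((3 * max C 1) ^ p) * pEnergy p u := by
        refine pEnergy_comp_le hp hφ hu (fun t => ?_) fun t => ?_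
        · rw [(hφ' t).deriv, abs_mul, abs_of_pos (by norm_num : (0 : ℝ) < 3)]
          nlinarith [hC (3 * t - 1), le_max_left C 1]
        · by_cases ht : t ≤ 1 / 3
          · rw [show φ t = 0 from smoothTransition.zero_of_nonpos (by linarith), abs_zero]
            positivity
          · rw [abs_of_nonneg (smoothTransition.nonneg _), abs_of_pos (by linarith)]
            nlinarith [smoothTransition.le_one (3 * t - 1), le_max_right C 1]

theorem IsQuasiOpen.exists_isOpen_subset_pCap_sdiff_eq_zero (hp : 0 ≤ p)
    {A : Set (EuclideanSpace ℝ (Fin N))} (hA : IsQuasiOpen N p A) :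
    ∃ U, IsOpen U ∧ U ⊆ A ∧ pCap N p (A \ U) = 0 := by
  obtain ⟨K, hK⟩ := exists_pCap_le_mul_pEnergy (N := N) hp
  choose ω _ hωcap hAω using fun n : ℕ => hA (n : ℝ≥0∞)⁻¹ (ENNReal.inv_pos.2 (natCast_ne_top n))
  choose u hu _ hωu hue using fun n => exists_pEnergy_lt_of_pCap_lt (hωcap n)
  have hω1 (n : ℕ) : ∀ x ∈ ω n, u n x = 1 := by
    obtain ⟨O, -, hωO, hO⟩ := hωu n
    exact fun x hx => hO x (hωO hx)
  refine ⟨⋃ n, (A ∪ ω n) ∩ {x | u n x < 1},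
    isOpen_iUnion fun n => (hAω n).inter (isOpen_lt (hu n).continuous continuous_const), ?_, ?_⟩
  · refine iUnion_subset fun n x ⟨hx, hlt⟩ => hx.resolve_right fun hxω => ?_
    exact (show u n x < 1 from hlt).ne (hω1 n x hxω)
  · have hsmall (n : ℕ) : pCap N p (A \ ⋃ n, (A ∪ ω n) ∩ {x | u n x < 1}) ≤
        ENNReal.ofReal (K ^ p) * (n : ℝ≥0∞)⁻¹ := by
      refine (hK _ (u n) (hu n) fun x hx => ?_).trans (mul_le_mul_right (hue n).le _)
      exact not_lt.mp fun (hlt : u n x < 1) => hx.2 (mem_iUnion.mpr ⟨n, Or.inl hx.1, hlt⟩)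
    have hlim : Tendsto (fun n : ℕ => ENNReal.ofReal (K ^ p) * (n : ℝ≥0∞)⁻¹) atTop (𝓝 0) := by
      simpa using ENNReal.Tendsto.const_mul ENNReal.tendsto_inv_nat_nhds_zero
        (Or.inr ENNReal.ofReal_ne_top)
    exact nonpos_iff_eq_zero.mp (ge_of_tendsto' hlim hsmall)

theorem IsQuasiOpen.measure_le_of_lintegral_rpow_le (hp : 0 < p)
    {μ ν : Measure (EuclideanSpace ℝ (Fin N))}
    (hμ : ∀ B, MeasurableSet B → pCap N p B = 0 → μ B = 0)
    (hle : ∀ u : EuclideanSpace ℝ (Fin N) → ℝ, Differentiable ℝ u →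
      ∫⁻ x, ENNReal.ofReal (|u x| ^ p) ∂μ ≤ ∫⁻ x, ENNReal.ofReal (|u x| ^ p) ∂ν)
    {A : Set (EuclideanSpace ℝ (Fin N))} (hA : MeasurableSet A) (hAq : IsQuasiOpen N p A) :
    μ A ≤ ν A := by
  obtain ⟨U, hU, hUA, hcap⟩ := hAq.exists_isOpen_subset_pCap_sdiff_eq_zero hp.le
  calc μ A = μ (A \ (A \ U)) := (measure_sdiff_null (hμ _ (hA.diff hU.measurableSet) hcap)).symm
    _ = μ U := by rw [sdiff_sdiff_cancel_left hUA]
    _ ≤ ν U := hU.measure_le_of_lintegral_rpow_le hp hle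
    _ ≤ ν A := measure_mono hUA

end Capacity

theorem stmt13_general (N : ℕ) (p : ℝ) (hp : 1 < p)
    (μ₁ μ₂ : Measure (EuclideanSpace ℝ (Fin N)))
    -- both measures are p-capacitary
    (hμ₁cap : ∀ B : Set (EuclideanSpace ℝ (Fin N)), MeasurableSet B → pCap N p B = 0 → μ₁ B = 0)
    (hμ₂cap : ∀ B : Set (EuclideanSpace ℝ (Fin N)), MeasurableSet B → pCap N p B = 0 → μ₂ B = 0) :
    ((∀ u : EuclideanSpace ℝ (Fin N) → ℝ, Differentiable ℝ u →
        (∫⁻ x, ENNReal.ofReal (|u x| ^ p) ∂μ₁) ≤ ∫⁻ x, ENNReal.ofReal (|u x| ^ p) ∂μ₂) →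
      ∀ A : Set (EuclideanSpace ℝ (Fin N)), MeasurableSet A → IsQuasiOpen N p A →
        μ₁ A ≤ μ₂ A) ∧
    ((∀ u : EuclideanSpace ℝ (Fin N) → ℝ, Differentiable ℝ u →
        (∫⁻ x, ENNReal.ofReal (|u x| ^ p) ∂μ₁) = ∫⁻ x, ENNReal.ofReal (|u x| ^ p) ∂μ₂) →
      ∀ A : Set (EuclideanSpace ℝ (Fin N)), MeasurableSet A → IsQuasiOpen N p A →
        μ₁ A = μ₂ A) := by
  have hp0 : 0 < p := zero_lt_one.trans hp
  refine ⟨fun hle A hA hAq => hAq.measure_le_of_lintegral_rpow_le hp0 hμ₁cap hle hA, ?_⟩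
  intro heq A hA hAq
  exact le_antisymm
    (hAq.measure_le_of_lintegral_rpow_le hp0 hμ₁cap (fun u hu => (heq u hu).le) hA)
    (hAq.measure_le_of_lintegral_rpow_le hp0 hμ₂cap (fun u hu => (heq u hu).ge) hA)

theorem stmt13 (N : ℕ) (p : ℝ) (hp : 1 < p)
    (μ₁ μ₂ : Measure (EuclideanSpace ℝ (Fin N)))
    -- both measures are p-capacitary
    (hμ₁cap : ∀ B : Set (EuclideanSpace ℝ (Fin N)), MeasurableSet B → pCap N p B = 0 → μ₁ B = 0)
    (hμ₂cap : ∀ B : Set (EuclideanSpace ℝ (Fin N)), MeasurableSet B → pCap N p B = 0 → μ₂ B = 0)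
    -- Cavalieri's principle for the integrals `∫|u|^p dμ`
    (hCav : ∀ (μ : Measure (EuclideanSpace ℝ (Fin N))) (u : EuclideanSpace ℝ (Fin N) → ℝ),
      Differentiable ℝ u →
      (∫⁻ x, ENNReal.ofReal (|u x| ^ p) ∂μ) =
        ∫⁻ y in Set.Ioi (0 : ℝ), μ {x | y ^ (1 / p) < |u x|}) :
    ((∀ u : EuclideanSpace ℝ (Fin N) → ℝ, Differentiable ℝ u →
        (∫⁻ x, ENNReal.ofReal (|u x| ^ p) ∂μ₁) ≤ ∫⁻ x, ENNReal.ofReal (|u x| ^ p) ∂μ₂) →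
      ∀ A : Set (EuclideanSpace ℝ (Fin N)), MeasurableSet A → IsQuasiOpen N p A →
        μ₁ A ≤ μ₂ A) ∧
    ((∀ u : EuclideanSpace ℝ (Fin N) → ℝ, Differentiable ℝ u →
        (∫⁻ x, ENNReal.ofReal (|u x| ^ p) ∂μ₁) = ∫⁻ x, ENNReal.ofReal (|u x| ^ p) ∂μ₂) →
      ∀ A : Set (EuclideanSpace ℝ (Fin N)), MeasurableSet A → IsQuasiOpen N p A →
        μ₁ A = μ₂ A) :=
  stmt13_general N p hp μ₁ μ₂ hμ₁cap hμ₂cap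
end

section
/- Let V : Ω → [0,+∞] be p-quasi upper semicontinuous and μ = V·ℒ^N. Then V_μ = V ℒ^N-a.e. in Ω, where V_μ is the density of μ over its set of σ-finiteness A_μ extended by +∞ off A_μ. -/
open MeasureTheory Filter Topology ENNReal

attribute [local instance] Classical.propDecidable

/-- A set `W` is `p`-finely open if the Wiener-type integral criterion holds at
every point of `W`. -/
def IsFinelyOpen (N : ℕ) (p : ℝ) (W : Set (EuclideanSpace ℝ (Fin N))) : Prop :=
  ∀ x ∈ W,
    (∫⁻ r in Set.Ioo (0 : ℝ) 1,
      ((pCap N p (Metric.ball x r \ W) / ENNReal.ofReal (r ^ ((N : ℝ) - p))) ^ (1 / (p - 1)))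
        / ENNReal.ofReal r) ≠ ⊤

/-- The set of σ-finiteness `A_μ` of a measure `μ`: the union of all Borel
`p`-finely open sets of finite `μ`-measure. -/
def sigmaSet (N : ℕ) (p : ℝ) (μ : Measure (EuclideanSpace ℝ (Fin N))) :
    Set (EuclideanSpace ℝ (Fin N)) :=
  ⋃₀ {W | MeasurableSet W ∧ IsFinelyOpen N p W ∧ μ W < ⊤}

/-- Admissible functions for the torsion problem in `Ω`: a surrogate for
`W^{1,p}₀(Ω)`. -/
def TorsAdm (N : ℕ) (p : ℝ) (Ω : Set (EuclideanSpace ℝ (Fin N)))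
    (w : EuclideanSpace ℝ (Fin N) → ℝ) : Prop :=
  Differentiable ℝ w ∧ (∀ x ∉ Ω, w x = 0) ∧
    MeasureTheory.MemLp w (ENNReal.ofReal p) ∧
    MeasureTheory.MemLp (fun x => fderiv ℝ w x) (ENNReal.ofReal p)

/-- The torsion energy `J_{Ω,μ}(v) = (1/p)∫|∇v|^p + (1/p)∫|v|^p dμ − ∫_Ω v`. -/
noncomputable def torsEnergy (N : ℕ) (p : ℝ) (μ : Measure (EuclideanSpace ℝ (Fin N)))
    (Ω : Set (EuclideanSpace ℝ (Fin N))) (w : EuclideanSpace ℝ (Fin N) → ℝ) : ℝ :=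
  (1 / p) * (∫ x, ‖fderiv ℝ w x‖ ^ p) +
    (1 / p) * (∫⁻ x, ENNReal.ofReal (|w x| ^ p) ∂μ).toReal - ∫ x in Ω, w x

/-- `w` is the torsion function of `μ` in `Ω`. -/
def IsTorsion (N : ℕ) (p : ℝ) (μ : Measure (EuclideanSpace ℝ (Fin N)))
    (Ω : Set (EuclideanSpace ℝ (Fin N))) (w : EuclideanSpace ℝ (Fin N) → ℝ) : Prop :=
  TorsAdm N p Ω w ∧ (∫⁻ x, ENNReal.ofReal (|w x| ^ p) ∂μ) ≠ ⊤ ∧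
    ∀ v, TorsAdm N p Ω v → (∫⁻ x, ENNReal.ofReal (|v x| ^ p) ∂μ) ≠ ⊤ →
      torsEnergy N p μ Ω w ≤ torsEnergy N p μ Ω v

/-- Weak convergence `wₙ ⇀ w` in (a surrogate of) `W^{1,p}₀(Ω)`. -/
def WeakW1pTendsto (N : ℕ) (p : ℝ) (w : ℕ → EuclideanSpace ℝ (Fin N) → ℝ)
    (w₀ : EuclideanSpace ℝ (Fin N) → ℝ) : Prop :=
  (∀ g : EuclideanSpace ℝ (Fin N) → ℝ,
      MeasureTheory.MemLp g (ENNReal.ofReal (p / (p - 1))) →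
      Tendsto (fun n => ∫ x, w n x * g x) atTop (𝓝 (∫ x, w₀ x * g x))) ∧
  (∀ G : EuclideanSpace ℝ (Fin N) → EuclideanSpace ℝ (Fin N),
      MeasureTheory.MemLp G (ENNReal.ofReal (p / (p - 1))) →
      Tendsto (fun n => ∫ x, fderiv ℝ (w n) x (G x)) atTop (𝓝 (∫ x, fderiv ℝ w₀ x (G x))))

/-- Local `γ`-convergence of measures: on every bounded open `Ω`, the torsion
functions converge weakly in `W^{1,p}₀(Ω)`. -/
def LocalGammaTendsto (N : ℕ) (p : ℝ) (μn : ℕ → Measure (EuclideanSpace ℝ (Fin N)))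
    (μ : Measure (EuclideanSpace ℝ (Fin N))) : Prop :=
  ∀ Ω : Set (EuclideanSpace ℝ (Fin N)), IsOpen Ω → Bornology.IsBounded Ω →
    ∀ (wn : ℕ → EuclideanSpace ℝ (Fin N) → ℝ) (w : EuclideanSpace ℝ (Fin N) → ℝ),
      (∀ n, IsTorsion N p (μn n) Ω (wn n)) → IsTorsion N p μ Ω w →
      WeakW1pTendsto N p wn w

/-- The density `V_μ` of the absolutely continuous part of `μ` on its set of
σ-finiteness `A_μ`, extended by `+∞` off `A_μ`. -/
noncomputable def Vmu (N : ℕ) (p : ℝ) (μ : Measure (EuclideanSpace ℝ (Fin N)))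
    (x : EuclideanSpace ℝ (Fin N)) : ℝ≥0∞ :=
  if x ∈ sigmaSet N p μ then (μ.restrict (sigmaSet N p μ)).rnDeriv volume x else ⊤

/-!
Every open set is `p`-finely open, so an open set of finite `μ`-measure lies in `A_μ`. The sublevel
set `{V < n}` is quasi open, hence differs from its interior only inside closed sets of arbitrarily
small Lebesgue measure (a capacitary test function equal to `1` on the exceptional open set `ω`
is `1` on a closed set containing it, whose measure is bounded by the energy). As `V < n` there,
the interior is locally of finite `μ`-measure and so lies in `A_μ`: thus `{V < ∞} ⊆ A_μ` a.e.,
and `V_μ = ∞ = V` a.e. off `A_μ`. On `A_μ` the density of `μ` restricted to `A_μ` is `V` a.e.,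
since that restriction is `V` times Lebesgue measure on a measurable hull of `A_μ`.
-/

open Metric Set

section Capacity

variable {N : ℕ} {p : ℝ}

lemma pCap_le_lintegral {S O : Set (EuclideanSpace ℝ (Fin N))} {u : EuclideanSpace ℝ (Fin N) → ℝ}
    (hu : Differentiable ℝ u) (hu01 : ∀ x, 0 ≤ u x ∧ u x ≤ 1) (hO : IsOpen O) (hSO : S ⊆ O)
    (hO1 : ∀ x ∈ O, u x = 1) :
    pCap N p S ≤ ∫⁻ x, ENNReal.ofReal (‖fderiv ℝ u x‖ ^ p + |u x| ^ p) :=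
  iInf_le_of_le u <| iInf_le_of_le hu <| iInf_le_of_le hu01 <|
    iInf_le_of_le ⟨O, hO, hSO, hO1⟩ le_rfl

lemma pCap_mono {S T : Set (EuclideanSpace ℝ (Fin N))} (h : S ⊆ T) :
    pCap N p S ≤ pCap N p T :=
  le_iInf fun _ => le_iInf fun hu => le_iInf fun hu01 => le_iInf fun ⟨_, hO, hTO, hO1⟩ =>
    pCap_le_lintegral hu hu01 hO (h.trans hTO) hO1

lemma pCap_empty (hp : 0 < p) : pCap N p (∅ : Set (EuclideanSpace ℝ (Fin N))) = 0 := by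
  refine le_antisymm ((pCap_le_lintegral (u := 0) (differentiable_const 0)
    (fun _ => ⟨le_rfl, zero_le_one⟩) isOpen_empty subset_rfl fun _ h => h.elim).trans ?_) zero_le
  simp [Real.zero_rpow hp.ne']

lemma lintegral_ofReal_energy_lt_top (hp : 0 < p) {u : EuclideanSpace ℝ (Fin N) → ℝ}
    (hu : ContDiff ℝ 1 u) (hc : HasCompactSupport u) :
    ∫⁻ x, ENNReal.ofReal (‖fderiv ℝ u x‖ ^ p + |u x| ^ p) < ⊤ := by
  refine Integrable.lintegral_lt_top (Continuous.integrable_of_hasCompactSupport ?_ ?_)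
  · exact ((hu.continuous_fderiv one_ne_zero).norm.rpow_const fun _ => Or.inr hp.le).add
      (hu.continuous.abs.rpow_const fun _ => Or.inr hp.le)
  · exact ((hc.fderiv ℝ).comp_left (g := fun L => ‖L‖ ^ p) (by simp [Real.zero_rpow hp.ne'])).add
      (hc.comp_left (g := fun t => |t| ^ p) (by simp [Real.zero_rpow hp.ne']))

lemma _root_.Bornology.IsBounded.pCap_lt_top (hp : 0 < p) {S : Set (EuclideanSpace ℝ (Fin N))}
    (hS : Bornology.IsBounded S) : pCap N p S < ⊤ := by
  obtain ⟨R, hR, hSR⟩ := hS.subset_closedBall_lt 0 0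
  let f : ContDiffBump (0 : EuclideanSpace ℝ (Fin N)) := ⟨R + 1, R + 2, by linarith, by linarith⟩
  refine lt_of_le_of_lt ?_ (lintegral_ofReal_energy_lt_top hp f.contDiff f.hasCompactSupport)
  exact pCap_le_lintegral (f.contDiff.differentiable one_ne_zero) (fun _ => ⟨f.nonneg, f.le_one⟩)
    isOpen_ball (hSR.trans (closedBall_subset_ball (by linarith)))
    fun _ hx => f.one_of_mem_closedBall (ball_subset_closedBall hx)

lemma exists_isClosed_superset_volume_lt_of_pCap_lt {S : Set (EuclideanSpace ℝ (Fin N))}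
    {ε : ℝ≥0∞} (h : pCap N p S < ε) : ∃ C, IsClosed C ∧ S ⊆ C ∧ volume C < ε := by
  simp only [pCap, iInf_lt_iff] at h
  obtain ⟨u, hu, -, ⟨O, -, hSO, hO1⟩, hE⟩ := h
  have hC : IsClosed {x | u x = 1} := isClosed_eq hu.continuous continuous_const
  refine ⟨_, hC, fun x hx => hO1 x (hSO hx), lt_of_le_of_lt ?_ hE⟩
  calc volume {x | u x = 1} = ∫⁻ _ in {x | u x = 1}, 1 := (setLIntegral_one _).symm
    _ ≤ ∫⁻ x in {x | u x = 1}, ENNReal.ofReal (‖fderiv ℝ u x‖ ^ p + |u x| ^ p) := by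
      refine setLIntegral_mono' hC.measurableSet fun x (hx : u x = 1) => ?_
      rw [ENNReal.one_le_ofReal, hx, abs_one, Real.one_rpow]
      linarith [Real.rpow_nonneg (norm_nonneg (fderiv ℝ u x)) p]
    _ ≤ _ := setLIntegral_le_lintegral _ _

lemma IsQuasiOpen.volume_diff_interior {A : Set (EuclideanSpace ℝ (Fin N))}
    (hA : IsQuasiOpen N p A) : volume (A \ interior A) = 0 := by
  refine le_antisymm (ENNReal.le_of_forall_pos_le_add fun ε hε _ => ?_) zero_le
  obtain ⟨ω, -, hωcap, hAω⟩ := hA ε (by exact_mod_cast hε)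
  obtain ⟨C, hC, hωC, hCvol⟩ := exists_isClosed_superset_volume_lt_of_pCap_lt hωcap
  have hint : (A ∪ ω) \ C ⊆ interior A := by
    refine interior_maximal ?_ (hAω.sdiff hC)
    rintro y ⟨hyA | hyω, hyC⟩
    exacts [hyA, (hyC (hωC hyω)).elim]
  have hsub : A \ interior A ⊆ C := by
    rintro x ⟨hxA, hxint⟩
    by_contra hxC
    exact hxint (hint ⟨Or.inl hxA, hxC⟩)
  rw [zero_add]
  exact (measure_mono hsub).trans hCvol.le

end Capacity

section SigmaSet

variable {N : ℕ} {p : ℝ}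

lemma isFinelyOpen_of_isOpen (hp : 1 < p) {W : Set (EuclideanSpace ℝ (Fin N))} (hW : IsOpen W) :
    IsFinelyOpen N p W := by
  intro x hx
  have hq : 0 < 1 / (p - 1) := one_div_pos.2 (sub_pos.2 hp)
  obtain ⟨δ, hδ, hδW⟩ : ∃ δ, 0 < δ ∧ ball x δ ⊆ W := Metric.isOpen_iff.1 hW x hx
  set c : ℝ := min (δ ^ ((N : ℝ) - p)) 1
  have hc : 0 < c := lt_min (Real.rpow_pos_of_pos hδ _) one_pos
  set K : ℝ≥0∞ :=
    (pCap N p (ball x 1) / ENNReal.ofReal c) ^ (1 / (p - 1)) / ENNReal.ofReal δ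
  have hK : K ≠ ⊤ := by
    refine ENNReal.div_ne_top (ENNReal.rpow_ne_top_of_nonneg hq.le ?_)
      (ENNReal.ofReal_pos.2 hδ).ne'
    exact ENNReal.div_ne_top ((isBounded_ball.pCap_lt_top (by linarith)).ne)
      (ENNReal.ofReal_pos.2 hc).ne'
  have hbound : ∀ r ∈ Ioo (0 : ℝ) 1,
      (pCap N p (ball x r \ W) / ENNReal.ofReal (r ^ ((N : ℝ) - p))) ^ (1 / (p - 1))
        / ENNReal.ofReal r ≤ K := by
    rintro r ⟨hr0, hr1⟩
    rcases lt_or_ge r δ with hrδ | hδr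
    · rw [sdiff_eq_empty.2 ((ball_subset_ball hrδ.le).trans hδW), pCap_empty (by linarith),
        ENNReal.zero_div, ENNReal.zero_rpow_of_pos hq, ENNReal.zero_div]
      exact zero_le
    · -- `r ^ (N - p)` is at least `δ ^ (N - p)` or at least `1`, according to the sign of `N - p`
      have hcr : c ≤ r ^ ((N : ℝ) - p) := by
        rcases le_or_gt 0 ((N : ℝ) - p) with hNp | hNp
        · exact (min_le_left _ _).trans (Real.rpow_le_rpow hδ.le hδr hNp)
        · exact (min_le_right _ _).trans
            (Real.one_le_rpow_of_pos_of_le_one_of_nonpos hr0 hr1.le hNp.le)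
      exact ENNReal.div_le_div (ENNReal.rpow_le_rpow (ENNReal.div_le_div
        (pCap_mono (sdiff_subset.trans (ball_subset_ball hr1.le))) (ENNReal.ofReal_le_ofReal hcr))
        hq.le) (ENNReal.ofReal_le_ofReal hδr)
  refine ne_top_of_le_ne_top ?_ (setLIntegral_mono' measurableSet_Ioo hbound)
  rw [setLIntegral_const, Real.volume_Ioo]
  exact ENNReal.mul_ne_top hK ENNReal.ofReal_ne_top

lemma subset_sigmaSet_of_isOpen (hp : 1 < p) {μ : Measure (EuclideanSpace ℝ (Fin N))}
    {W : Set (EuclideanSpace ℝ (Fin N))} (hW : IsOpen W) (hμW : μ W < ⊤) : W ⊆ sigmaSet N p μ :=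
  fun _ hy => ⟨W, ⟨hW.measurableSet, isFinelyOpen_of_isOpen hp hW, hμW⟩, hy⟩

lemma subset_sigmaSet_withDensity_of_isOpen (hp : 1 < p)
    {ν : Measure (EuclideanSpace ℝ (Fin N))} [IsFiniteMeasureOnCompacts ν]
    {V : EuclideanSpace ℝ (Fin N) → ℝ≥0∞} {W : Set (EuclideanSpace ℝ (Fin N))} (hW : IsOpen W)
    {t : ℝ≥0∞} (ht : t ≠ ⊤) (hVW : ∀ x ∈ W, V x ≤ t) : W ⊆ sigmaSet N p (ν.withDensity V) := by
  intro y hy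
  have hWy : MeasurableSet (W ∩ ball y 1) := hW.measurableSet.inter measurableSet_ball
  refine subset_sigmaSet_of_isOpen hp (hW.inter isOpen_ball) ?_ ⟨hy, mem_ball_self one_pos⟩
  calc ν.withDensity V (W ∩ ball y 1) = ∫⁻ x in W ∩ ball y 1, V x ∂ν := withDensity_apply _ hWy
    _ ≤ ∫⁻ _ in W ∩ ball y 1, t ∂ν := setLIntegral_mono' hWy fun x hx => hVW x hx.1
    _ ≤ t * ν (ball y 1) := by rw [setLIntegral_const]; gcongr; exact inter_subset_right
    _ < ⊤ := ENNReal.mul_lt_top ht.lt_top measure_ball_lt_top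

lemma IsQuasiOpen.ae_mem_sigmaSet_withDensity (hp : 1 < p)
    {ν : Measure (EuclideanSpace ℝ (Fin N))} [IsFiniteMeasureOnCompacts ν]
    {V : EuclideanSpace ℝ (Fin N) → ℝ≥0∞} {A : Set (EuclideanSpace ℝ (Fin N))}
    (hA : IsQuasiOpen N p A) {t : ℝ≥0∞} (ht : t ≠ ⊤) (hVA : ∀ x ∈ A, V x ≤ t) :
    ∀ᵐ x ∂volume, x ∈ A → x ∈ sigmaSet N p (ν.withDensity V) := by
  filter_upwards [measure_eq_zero_iff_ae_notMem.1 hA.volume_diff_interior] with x hx hxA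
  refine subset_sigmaSet_withDensity_of_isOpen hp isOpen_interior ht
    (fun y hy => hVA y (interior_subset hy)) ?_
  by_contra hxint
  exact hx ⟨hxA, hxint⟩

end SigmaSet

lemma ae_rnDeriv_restrict_withDensity_eq {α : Type*} [MeasurableSpace α] (ν : Measure α)
    [SigmaFinite ν] {f : α → ℝ≥0∞} (hf : Measurable f) (s : Set α) :
    ∀ᵐ x ∂ν, x ∈ s → ((ν.withDensity f).restrict s).rnDeriv ν x = f x := by
  set t := toMeasurable (ν.withDensity f) s
  have ht : MeasurableSet t := measurableSet_toMeasurable _ _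
  have hrestrict : (ν.withDensity f).restrict s = ν.withDensity (t.indicator f) := by
    rw [← Measure.restrict_toMeasurable_of_sFinite, restrict_withDensity ht,
      withDensity_indicator ht]
  filter_upwards [hrestrict ▸ Measure.rnDeriv_withDensity ν (hf.indicator ht)] with x hx hxs
  rw [hx, indicator_of_mem (subset_toMeasurable _ _ hxs)]

theorem stmt17 (N : ℕ) (p : ℝ) (hp : 1 < p)
    (Ω : Set (EuclideanSpace ℝ (Fin N))) (hΩ : IsOpen Ω)
    (V : EuclideanSpace ℝ (Fin N) → ℝ≥0∞) (hVmeas : Measurable V)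
    -- V is p-quasi upper semicontinuous: its strict sublevel sets are p-quasi open
    (husc : ∀ t : ℝ≥0∞, IsQuasiOpen N p {x ∈ Ω | V x < t}) :
    ∀ᵐ x ∂(volume.restrict Ω),
      Vmu N p ((volume.restrict Ω).withDensity V) x = V x := by
  set μ := (volume.restrict Ω).withDensity V
  have hμ : volume.withDensity (Ω.indicator V) = μ :=
    withDensity_indicator hΩ.measurableSet V
  have hdensity := ae_rnDeriv_restrict_withDensity_eq volume
    (hVmeas.indicator hΩ.measurableSet) (sigmaSet N p μ)
  have hfinite : ∀ᵐ x ∂volume, ∀ n : ℕ, x ∈ {x ∈ Ω | V x < n} → x ∈ sigmaSet N p μ :=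
    ae_all_iff.2 fun n =>
      (husc n).ae_mem_sigmaSet_withDensity hp (ENNReal.natCast_ne_top n) fun _ hx => hx.2.le
  rw [hμ] at hdensity
  rw [ae_restrict_iff' hΩ.measurableSet]
  filter_upwards [hdensity, hfinite] with x hxdensity hxfinite hxΩ
  by_cases hxS : x ∈ sigmaSet N p μ
  · rw [Vmu, if_pos hxS, hxdensity hxS, indicator_of_mem hxΩ]
  · rw [Vmu, if_neg hxS, eq_comm, ← not_lt_top_iff]
    intro hVx
    obtain ⟨n, hn⟩ := ENNReal.exists_nat_gt hVx.ne
    exact hxS (hxfinite n ⟨hxΩ, hn⟩)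
end
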